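/- arXiv:2304.13127 — 6 statements merged into one kernel-verified Lean document; each statement's English description precedes it below -/
import Mathlib

section
/- Let 0 < a < b, let ρ : [a,b] → ℝ be integrable and set ω(x) = 1 + ∫ₐˣ ρ(s) ds, assuming ω(b) = 0. Define J_{ab;ω}(z,w) = ∫₀^a u(z,x)ᵀ H(x) u(conj(w),x) dx + ∫ₐ^b ω(x) u(z,x)ᵀ H(x) u(conj(w),x) dx. Then for all z ∈ ℂ and all w ∈ ℂ with w ≠ 0, (z - conj(w)) · J_{ab;ω}(z,w) = - ∫ₐ^b u(z,x)ᵀ 𝒥 u(conj(w),x) ρ(x) dx. -/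
open MeasureTheory Matrix Set

noncomputable section

/-- The symplectic matrix 𝒥 = [[0,-1],[1,0]] over ℝ. -/
def J2 : Matrix (Fin 2) (Fin 2) ℝ := !![0, -1; 1, 0]

/-- The symplectic matrix 𝒥 = [[0,-1],[1,0]] over ℂ. -/
def J2C : Matrix (Fin 2) (Fin 2) ℂ := !![0, -1; 1, 0]

/-- Complexification of a real 2×2 matrix. -/
def cmat (M : Matrix (Fin 2) (Fin 2) ℝ) : Matrix (Fin 2) (Fin 2) ℂ :=
  M.map Complex.ofReal

lemma fubini_mul_primitive (α β : ℝ) (f g : ℝ → ℂ)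
    (hf : IntegrableOn f (Ioc α β)) (hg : IntegrableOn g (Ioc α β)) :
    (∫ x in Ioc α β, f x) * (∫ x in Ioc α β, g x)
      = (∫ x in Ioc α β, f x * ∫ t in Ioc α x, g t)
        + ∫ x in Ioc α β, g x * ∫ t in Ioc α x, f t := by
  set μ := volume.restrict (Ioc α β) with hμ
  have hFint : Integrable (fun p : ℝ × ℝ => f p.1 * g p.2) (μ.prod μ) := hf.mul_prod hg
  have hs : MeasurableSet {p : ℝ × ℝ | p.2 ≤ p.1} := measurableSet_le measurable_snd measurable_fst
  have hsplit := integral_add_compl hs hFint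
  have h1 : ∫ p in {p : ℝ × ℝ | p.2 ≤ p.1}, f p.1 * g p.2 ∂(μ.prod μ)
      = ∫ x in Ioc α β, f x * ∫ t in Ioc α x, g t := by
    rw [← integral_indicator hs, integral_prod _ (hFint.indicator hs)]
    rw [integral_congr_ae ((ae_restrict_iff' measurableSet_Ioc).2 (Filter.Eventually.of_forall
      (fun x hx => ?_)))]
    have : ∀ y : ℝ, ({p : ℝ × ℝ | p.2 ≤ p.1}.indicator (fun p => f p.1 * g p.2)) (x, y)
        = (Iic x).indicator (fun y => f x * g y) y := by
      intro y
      by_cases h : y ≤ x <;> simp [Set.indicator, h]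
    simp_rw [this]
    rw [integral_indicator measurableSet_Iic, Measure.restrict_restrict measurableSet_Iic,
      integral_const_mul]
    congr 2
    rw [Iic_inter_Ioc_of_le hx.2]
  have h2 : ∫ p in {p : ℝ × ℝ | p.2 ≤ p.1}ᶜ, f p.1 * g p.2 ∂(μ.prod μ)
      = ∫ x in Ioc α β, g x * ∫ t in Ioc α x, f t := by
    rw [← integral_indicator hs.compl, integral_prod_symm _ (hFint.indicator hs.compl)]
    rw [integral_congr_ae ((ae_restrict_iff' measurableSet_Ioc).2 (Filter.Eventually.of_forall
      (fun y hy => ?_)))]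
    have : ∀ x : ℝ, ({p : ℝ × ℝ | p.2 ≤ p.1}ᶜ.indicator (fun p => f p.1 * g p.2)) (x, y)
        = (Iio y).indicator (fun x => g y * f x) x := by
      intro x
      by_cases h : y ≤ x
      · simp [Set.indicator, h, not_lt.2 h]
      · simp [Set.indicator, h, lt_of_not_ge h, mul_comm]
    simp_rw [this]
    rw [integral_indicator measurableSet_Iio, Measure.restrict_restrict measurableSet_Iio,
      integral_const_mul]
    have : Iio y ∩ Ioc α β = Ioo α y := by
      ext t; simp only [mem_inter_iff, mem_Iio, mem_Ioc, mem_Ioo]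
      constructor
      · rintro ⟨h1, h2, h3⟩; exact ⟨h2, h1⟩
      · rintro ⟨h1, h2⟩; exact ⟨h2, h1, h2.le.trans hy.2⟩
    rw [this, ← integral_Ioc_eq_integral_Ioo]
  rw [← integral_prod_mul, ← hsplit, h1, h2]

lemma parts_primitive (α β : ℝ) (hαβ : α ≤ β) (f g : ℝ → ℂ)
    (hf : IntegrableOn f (Icc α β)) (hg : IntegrableOn g (Icc α β)) (c d : ℂ) :
    (c + ∫ t in α..β, f t) * (d + ∫ t in α..β, g t) - c * d
      = ∫ x in α..β, (f x * (d + ∫ t in α..x, g t) + (c + ∫ t in α..x, f t) * g x) := by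
  have hf' : IntegrableOn f (Ioc α β) := hf.mono_set Ioc_subset_Icc_self
  have hg' : IntegrableOn g (Ioc α β) := hg.mono_set Ioc_subset_Icc_self
  have hGcont : ContinuousOn (fun x => ∫ t in Ioc α x, g t) (Icc α β) :=
    intervalIntegral.continuousOn_primitive hg
  have hFcont : ContinuousOn (fun x => ∫ t in Ioc α x, f t) (Icc α β) :=
    intervalIntegral.continuousOn_primitive hf
  have hA2 : IntegrableOn (fun x => f x * ∫ t in Ioc α x, g t) (Ioc α β) :=
    (hf.mul_continuousOn hGcont isCompact_Icc).mono_set Ioc_subset_Icc_self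
  have hB2 : IntegrableOn (fun x => (∫ t in Ioc α x, f t) * g x) (Ioc α β) :=
    (hg.continuousOn_mul hFcont isCompact_Icc).mono_set Ioc_subset_Icc_self
  rw [intervalIntegral.integral_of_le hαβ, intervalIntegral.integral_of_le hαβ,
    intervalIntegral.integral_of_le hαβ]
  have hcong : ∫ x in Ioc α β,
        (f x * (d + ∫ t in α..x, g t) + (c + ∫ t in α..x, f t) * g x)
      = ∫ x in Ioc α β,
        (f x * (d + ∫ t in Ioc α x, g t) + (c + ∫ t in Ioc α x, f t) * g x) := by
    refine integral_congr_ae ((ae_restrict_iff' measurableSet_Ioc).2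
      (Filter.Eventually.of_forall (fun x hx => ?_)))
    simp only [intervalIntegral.integral_of_le hx.1.le]
  rw [hcong]
  have split : ∫ x in Ioc α β,
        (f x * (d + ∫ t in Ioc α x, g t) + (c + ∫ t in Ioc α x, f t) * g x)
      = ((∫ x in Ioc α β, f x) * d + ∫ x in Ioc α β, f x * ∫ t in Ioc α x, g t)
        + (c * (∫ x in Ioc α β, g x) + ∫ x in Ioc α β, (∫ t in Ioc α x, f t) * g x) := by
    have hA1 : IntegrableOn (fun x => f x * d) (Ioc α β) := hf'.mul_const d
    have hB1 : IntegrableOn (fun x => c * g x) (Ioc α β) := hg'.const_mul c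
    have hA : IntegrableOn (fun x => f x * d + f x * ∫ t in Ioc α x, g t) (Ioc α β) := hA1.add hA2
    have hB : IntegrableOn (fun x => c * g x + (∫ t in Ioc α x, f t) * g x) (Ioc α β) := hB1.add hB2
    simp_rw [mul_add, add_mul]
    rw [integral_add hA hB, integral_add hA1 hA2, integral_add hB1 hB2,
      integral_mul_const, integral_const_mul]
  rw [split]
  have fub := fubini_mul_primitive α β f g hf' hg'
  have : ∫ x in Ioc α β, (∫ t in Ioc α x, f t) * g x
      = ∫ x in Ioc α β, g x * ∫ t in Ioc α x, f t := by
    simp_rw [mul_comm]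
  rw [this]
  linear_combination fub

lemma parts_abstract (α β : ℝ) (hαβ : α ≤ β) (f g F G : ℝ → ℂ)
    (hf : IntegrableOn f (Icc α β)) (hg : IntegrableOn g (Icc α β))
    (hF : ∀ x ∈ Icc α β, F x = F α + ∫ t in α..x, f t)
    (hG : ∀ x ∈ Icc α β, G x = G α + ∫ t in α..x, g t) :
    F β * G β - F α * G α = ∫ x in α..β, (f x * G x + F x * g x) := by
  rw [hF β ⟨hαβ, le_rfl⟩, hG β ⟨hαβ, le_rfl⟩,
    parts_primitive α β hαβ f g hf hg (F α) (G α)]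
  refine intervalIntegral.integral_congr (fun x hx => ?_)
  rw [uIcc_of_le hαβ] at hx
  rw [hF x hx, hG x hx]

/-- With `ω(x) = 1 + ∫ₐˣ ρ`, `ω(b) = 0`, and
`J_{ab;ω}(z,w) = ∫₀ᵃ u(z,x)ᵀ H(x) u(w̄,x) dx + ∫ₐᵇ ω(x) u(z,x)ᵀ H(x) u(w̄,x) dx`,
one has `(z - w̄) J_{ab;ω}(z,w) = -∫ₐᵇ u(z,x)ᵀ 𝒥 u(w̄,x) ρ(x) dx` for `w ≠ 0`. -/
theorem J_identity
    (a b : ℝ) (ha : 0 < a) (hab : a < b)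
    (H : ℝ → Matrix (Fin 2) (Fin 2) ℝ)
    (hHint : ∀ i j, IntegrableOn (fun x => H x i j) (Icc 0 b))
    (hH : ∀ᵐ x ∂volume, x ∈ Ioo 0 b → (H x).PosSemidef ∧ (H x).trace = 1)
    (u : ℂ → ℝ → Fin 2 → ℂ)
    (hucont : ∀ z, ContinuousOn (u z) (Icc 0 b))
    (hueq : ∀ z, ∀ x ∈ Icc 0 b,
      u z x = ![1, 0] + z • ∫ s in (0:ℝ)..x, (J2C * cmat (H s)) *ᵥ u z s)
    (ρ : ℝ → ℝ) (hρint : IntegrableOn ρ (Icc a b))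
    (ω : ℝ → ℝ) (hω : ∀ x, ω x = 1 + ∫ s in a..x, ρ s)
    (hωb : ω b = 0) :
    ∀ z w : ℂ, w ≠ 0 →
      (z - (starRingEnd ℂ) w) *
          ((∫ x in (0:ℝ)..a, u z x ⬝ᵥ (cmat (H x) *ᵥ u ((starRingEnd ℂ) w) x))
            + ∫ x in a..b, (ω x : ℂ) * (u z x ⬝ᵥ (cmat (H x) *ᵥ u ((starRingEnd ℂ) w) x)))
        = - ∫ x in a..b, (u z x ⬝ᵥ (J2C *ᵥ u ((starRingEnd ℂ) w) x)) * (ρ x : ℂ) := by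
  intro z w _
  set w' : ℂ := (starRingEnd ℂ) w with hw'
  have hb0 : (0:ℝ) ≤ b := (ha.trans hab).le
  have h0a : (0:ℝ) ≤ a := ha.le
  have hIab : Icc a b ⊆ Icc 0 b := Icc_subset_Icc h0a le_rfl
  have hcu : ∀ z (i : Fin 2), ContinuousOn (fun x => u z x i) (Icc 0 b) :=
    fun z i => (continuous_apply i).comp_continuousOn (hucont z)
  have hHC : ∀ (k j : Fin 2) (φ : ℝ → ℂ), ContinuousOn φ (Icc 0 b) →
      IntegrableOn (fun x => (H x k j : ℂ) * φ x) (Icc 0 b) :=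
    fun k j φ hφ => MeasureTheory.IntegrableOn.mul_continuousOn ((hHint k j).ofReal) hφ isCompact_Icc
  -- integrability of integrand components
  have hPint : ∀ z (i : Fin 2),
      IntegrableOn (fun x => ((J2C * cmat (H x)) *ᵥ u z x) i) (Icc 0 b) := by
    intro z i
    fin_cases i
    · show IntegrableOn (fun x => ((J2C * cmat (H x)) *ᵥ u z x) (0:Fin 2)) (Icc 0 b) volume
      have heq : (fun x => ((J2C * cmat (H x)) *ᵥ u z x) 0)
          = fun x => -((H x 1 0 : ℂ) * u z x 0) + -((H x 1 1 : ℂ) * u z x 1) := by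
        funext x
        simp [J2C, cmat, Matrix.mulVec, Matrix.mul_apply, Fin.sum_univ_two, dotProduct]
        ring
      rw [heq]
      exact ((hHC 1 0 _ (hcu z 0)).neg).add ((hHC 1 1 _ (hcu z 1)).neg)
    · show IntegrableOn (fun x => ((J2C * cmat (H x)) *ᵥ u z x) (1:Fin 2)) (Icc 0 b) volume
      have heq : (fun x => ((J2C * cmat (H x)) *ᵥ u z x) 1)
          = fun x => (H x 0 0 : ℂ) * u z x 0 + (H x 0 1 : ℂ) * u z x 1 := by
        funext x
        simp [J2C, cmat, Matrix.mulVec, Matrix.mul_apply, Fin.sum_univ_two, dotProduct]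
      rw [heq]
      exact (hHC 0 0 _ (hcu z 0)).add (hHC 0 1 _ (hcu z 1))
  have hPvec : ∀ z, IntegrableOn (fun x => (J2C * cmat (H x)) *ᵥ u z x) (Icc 0 b) := by
    intro z
    have heq : (fun x => (J2C * cmat (H x)) *ᵥ u z x)
        = fun x => (((J2C * cmat (H x)) *ᵥ u z x) 0) • (Pi.single (0:Fin 2) (1:ℂ) : Fin 2 → ℂ)
          + (((J2C * cmat (H x)) *ᵥ u z x) 1) • (Pi.single (1:Fin 2) (1:ℂ) : Fin 2 → ℂ) := by
      funext x i
      fin_cases i <;> simp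
    rw [heq]
    exact ((hPint z 0).smul_const _).add ((hPint z 1).smul_const _)
  -- componentwise integral equation
  have hcomp : ∀ z, ∀ x ∈ Icc (0:ℝ) b, ∀ i : Fin 2,
      u z x i = ![(1:ℂ),0] i + z * ∫ s in (0:ℝ)..x, ((J2C * cmat (H s)) *ᵥ u z s) i := by
    intro z x hx i
    have h := congrFun (hueq z x hx) i
    have hiint : IntervalIntegrable (fun s => (J2C * cmat (H s)) *ᵥ u z s) volume 0 x :=
      ((hPvec z).mono_set (by rw [uIcc_of_le hx.1]; exact Icc_subset_Icc le_rfl hx.2)).intervalIntegrable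
    have hproj := (ContinuousLinearMap.proj (R := ℂ) (φ := fun _ : Fin 2 => ℂ) i).intervalIntegral_comp_comm hiint
    simp only [Pi.add_apply, Pi.smul_apply, smul_eq_mul] at h
    rw [h]
    congr 2
    rw [show (∫ s in (0:ℝ)..x, (J2C * cmat (H s)) *ᵥ u z s) i
        = (ContinuousLinearMap.proj (R:=ℂ) (φ := fun _ : Fin 2 => ℂ) i)
            (∫ s in (0:ℝ)..x, (J2C * cmat (H s)) *ᵥ u z s) from rfl, ← hproj]
    rfl
  -- abbreviations
  set gzw : ℝ → ℂ := fun x => u z x ⬝ᵥ (cmat (H x) *ᵥ u w' x) with hgzw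
  set F : ℝ → ℂ := fun x => u z x ⬝ᵥ (J2C *ᵥ u w' x) with hFdef
  have hgterm : ∀ (i j : Fin 2),
      IntegrableOn (fun x => (H x i j : ℂ) * (u z x i * u w' x j)) (Icc 0 b) :=
    fun i j => hHC i j _ ((hcu z i).mul (hcu w' j))
  have hgint : IntegrableOn gzw (Icc 0 b) := by
    have heq : gzw = fun x =>
        ((H x 0 0 : ℂ) * (u z x 0 * u w' x 0) + (H x 0 1 : ℂ) * (u z x 0 * u w' x 1))
          + ((H x 1 0 : ℂ) * (u z x 1 * u w' x 0) + (H x 1 1 : ℂ) * (u z x 1 * u w' x 1)) := by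
      funext x
      simp [hgzw, cmat, Matrix.mulVec, dotProduct, Fin.sum_univ_two]
      ring
    rw [heq]
    exact ((hgterm 0 0).add (hgterm 0 1)).add ((hgterm 1 0).add (hgterm 1 1))
  have hgII : ∀ {α β : ℝ}, α ∈ Icc (0:ℝ) b → β ∈ Icc (0:ℝ) b →
      IntervalIntegrable gzw volume α β :=
    fun hα hβ => (hgint.mono_set (uIcc_subset_Icc hα hβ)).intervalIntegrable
  -- the key identity F x = (z - w') ∫₀ˣ gzw
  have hM : ∀ x ∈ Icc (0:ℝ) b, F x = (z - w') * ∫ s in (0:ℝ)..x, gzw s := by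
    intro x hx
    have hxI : Icc (0:ℝ) x ⊆ Icc 0 b := Icc_subset_Icc le_rfl hx.2
    have pair : ∀ (i j : Fin 2),
        u z x i * u w' x j - ![(1:ℂ),0] i * ![(1:ℂ),0] j
          = ∫ s in (0:ℝ)..x, ((z * ((J2C * cmat (H s)) *ᵥ u z s) i) * u w' s j
              + u z s i * (w' * ((J2C * cmat (H s)) *ᵥ u w' s) j)) := by
      intro i j
      have h0 : u z 0 i = ![(1:ℂ),0] i := by
        rw [hcomp z 0 ⟨le_rfl, hb0⟩ i]; simp
      have h0' : u w' 0 j = ![(1:ℂ),0] j := by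
        rw [hcomp w' 0 ⟨le_rfl, hb0⟩ j]; simp
      have key := parts_abstract 0 x hx.1
        (fun s => z * ((J2C * cmat (H s)) *ᵥ u z s) i)
        (fun s => w' * ((J2C * cmat (H s)) *ᵥ u w' s) j)
        (fun s => u z s i) (fun s => u w' s j)
        (((hPint z i).mono_set hxI).const_mul z)
        (((hPint w' j).mono_set hxI).const_mul w')
        (fun s hs => by
          show u z s i = u z 0 i + ∫ t in (0:ℝ)..s, z * ((J2C * cmat (H t)) *ᵥ u z t) i
          rw [hcomp z s ⟨hs.1, hs.2.trans hx.2⟩ i, h0, intervalIntegral.integral_const_mul])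
        (fun s hs => by
          show u w' s j = u w' 0 j + ∫ t in (0:ℝ)..s, w' * ((J2C * cmat (H t)) *ᵥ u w' t) j
          rw [hcomp w' s ⟨hs.1, hs.2.trans hx.2⟩ j, h0', intervalIntegral.integral_const_mul])
      beta_reduce at key
      rw [h0, h0'] at key
      exact key
    have intIJ : ∀ (i j : Fin 2), IntervalIntegrable
        (fun s => (z * ((J2C * cmat (H s)) *ᵥ u z s) i) * u w' s j
          + u z s i * (w' * ((J2C * cmat (H s)) *ᵥ u w' s) j)) volume 0 x := by
      intro i j
      have hone : IntegrableOn (fun s => (z * ((J2C * cmat (H s)) *ᵥ u z s) i) * u w' s j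
          + u z s i * (w' * ((J2C * cmat (H s)) *ᵥ u w' s) j)) (uIcc 0 x) := by
        rw [uIcc_of_le hx.1]
        exact (MeasureTheory.IntegrableOn.mul_continuousOn
          (((hPint z i).mono_set hxI).const_mul z) ((hcu w' j).mono hxI) isCompact_Icc).add
          (MeasureTheory.IntegrableOn.continuousOn_mul ((hcu z i).mono hxI)
          (((hPint w' j).mono_set hxI).const_mul w') isCompact_Icc)
      exact hone.intervalIntegrable
    have hFx : F x = u z x 1 * u w' x 0 - u z x 0 * u w' x 1 := by
      simp [hFdef, J2C, Matrix.mulVec, dotProduct, Fin.sum_univ_two]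
      ring
    have p1 := pair 1 0
    have p0 := pair 0 1
    have e10 : (![(1:ℂ),0] 1 * ![(1:ℂ),0] 0 : ℂ) = 0 := by simp
    have e01 : (![(1:ℂ),0] 0 * ![(1:ℂ),0] 1 : ℂ) = 0 := by simp
    rw [e10, sub_zero] at p1
    rw [e01, sub_zero] at p0
    rw [hFx, p1, p0, ← intervalIntegral.integral_sub (intIJ 1 0) (intIJ 0 1),
      ← intervalIntegral.integral_const_mul]
    refine intervalIntegral.integral_congr_ae ?_
    have hne : ∀ᵐ s : ℝ ∂(volume : Measure ℝ), s ≠ b := by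
      rw [ae_iff]
      have : {s : ℝ | ¬ s ≠ b} = {b} := by ext s; simp
      rw [this]
      exact measure_singleton b
    filter_upwards [hH, hne] with s hs hsb hmem
    rw [uIoc_of_le hx.1] at hmem
    have hsIoo : s ∈ Ioo 0 b := ⟨hmem.1, lt_of_le_of_ne (hmem.2.trans hx.2) hsb⟩
    obtain ⟨hpsd, -⟩ := hs hsIoo
    have hsym : H s 1 0 = H s 0 1 := by
      have h2 := congrFun (congrFun hpsd.isHermitian 0) 1
      simpa [Matrix.conjTranspose_apply] using h2
    have hsymC : ((H s 1 0 : ℝ) : ℂ) = ((H s 0 1 : ℝ) : ℂ) := by rw [hsym]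
    simp only [hgzw, J2C, cmat, Matrix.mulVec, Matrix.mul_apply, dotProduct,
      Fin.sum_univ_two, Matrix.map_apply, Matrix.of_apply, Matrix.cons_val',
      Matrix.cons_val_zero, Matrix.cons_val_one, Matrix.head_cons, Matrix.empty_val',
      Matrix.cons_val_fin_one, Matrix.head_fin_const]
    rw [hsymC]
    ring
  -- assembly
  have hFa : F a = (z - w') * ∫ x in (0:ℝ)..a, gzw x := hM a ⟨h0a, hab.le⟩
  have hωa : ω a = 1 := by rw [hω a, intervalIntegral.integral_same, add_zero]
  have hωC : ∀ x ∈ Icc a b, ((ω x : ℝ) : ℂ) = ((ω a : ℝ) : ℂ) + ∫ t in a..x, ((ρ t : ℝ) : ℂ) := by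
    intro x hx
    rw [hω x, hωa, intervalIntegral.integral_ofReal]
    push_cast
    ring
  have hFform : ∀ x ∈ Icc a b, F x = F a + ∫ t in a..x, (z - w') * gzw t := by
    intro x hx
    rw [hM x ⟨h0a.trans hx.1, hx.2⟩, hFa, intervalIntegral.integral_const_mul, ← mul_add,
      intervalIntegral.integral_add_adjacent_intervals (hgII ⟨le_rfl, hb0⟩ ⟨h0a, hab.le⟩)
        (hgII ⟨h0a, hab.le⟩ (hIab hx))]
  have hprts := parts_abstract a b hab.le (fun x => (z - w') * gzw x)
      (fun x => ((ρ x : ℝ) : ℂ)) F (fun x => ((ω x : ℝ) : ℂ))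
      ((hgint.mono_set hIab).const_mul _) (hρint.ofReal) hFform hωC
  beta_reduce at hprts
  rw [hωb, hωa] at hprts
  simp only [Complex.ofReal_zero, Complex.ofReal_one, mul_zero, mul_one, zero_sub] at hprts
  have hωcont : ContinuousOn (fun x => ((ω x : ℝ) : ℂ)) (Icc a b) := by
    have h1 : ContinuousOn (fun x => ∫ t in Ioc a x, ρ t) (Icc a b) :=
      intervalIntegral.continuousOn_primitive hρint
    have h2 : ContinuousOn ω (Icc a b) := by
      have hc : ContinuousOn (fun x => 1 + ∫ t in Ioc a x, ρ t) (Icc a b) :=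
        continuousOn_const.add h1
      refine hc.congr (fun x hx => ?_)
      rw [hω x, intervalIntegral.integral_of_le hx.1]
    exact Complex.continuous_ofReal.comp_continuousOn h2
  have hFcont : ContinuousOn F (Icc 0 b) := by
    have heq : (fun x => u z x 1 * u w' x 0 - u z x 0 * u w' x 1) = F := by
      funext x
      simp [hFdef, J2C, Matrix.mulVec, dotProduct, Fin.sum_univ_two]
      ring
    rw [← heq]
    exact ((hcu z 1).mul (hcu w' 0)).sub ((hcu z 0).mul (hcu w' 1))
  have hint1 : IntervalIntegrable (fun x => (z - w') * gzw x * ((ω x : ℝ) : ℂ)) volume a b := by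
    apply IntegrableOn.intervalIntegrable
    rw [uIcc_of_le hab.le]
    exact MeasureTheory.IntegrableOn.mul_continuousOn ((hgint.mono_set hIab).const_mul _)
      hωcont isCompact_Icc
  have hint2 : IntervalIntegrable (fun x => F x * ((ρ x : ℝ) : ℂ)) volume a b := by
    apply IntegrableOn.intervalIntegrable
    rw [uIcc_of_le hab.le]
    exact MeasureTheory.IntegrableOn.continuousOn_mul (hFcont.mono hIab)
      (hρint.ofReal) isCompact_Icc
  rw [intervalIntegral.integral_add hint1 hint2] at hprts
  have hshift : ∫ x in a..b, (z - w') * gzw x * ((ω x : ℝ) : ℂ)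
      = (z - w') * ∫ x in a..b, ((ω x : ℝ) : ℂ) * gzw x := by
    rw [← intervalIntegral.integral_const_mul]
    exact intervalIntegral.integral_congr (fun x _ => by ring)
  rw [hshift] at hprts
  show (z - w') * ((∫ x in (0:ℝ)..a, gzw x) + ∫ x in a..b, ((ω x : ℝ) : ℂ) * gzw x)
      = - ∫ x in a..b, F x * ((ρ x : ℝ) : ℂ)
  rw [mul_add]
  linear_combination -hFa - hprts
end
end

section
/- Suppose there exist 0 < a < c ≤ b and g₀ ∈ (-1/2, 1/2) such that H(x) = diag(1/2 + g₀, 1/2 - g₀) for a.e. x ∈ [a,c]. Then for every compact set K ⊂ ℂ there exists C > 0 such that for all z ∈ K and all λ ∈ ℝ, |∫ₐ^c u(z,x)ᵀ 𝒥 u(λ,x) dx| ≤ C · (∫₀^b u(λ,x)ᵀ H(x) u(λ,x) dx)^{1/2}. -/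
open MeasureTheory Matrix Set

noncomputable section

/-!
A Grönwall argument bounds `u z` on `[0, b]` uniformly for `z` in the compact set `K`: on every
piece of `[0, b]` over which `|z| ∫ |H|` grows by at most `1 / 2`, the sup norm of `u z` at most
doubles. On `[a, c]` the Hamiltonian dominates `m = min (1/2 + g₀) (1/2 - g₀) > 0` times the
identity, and it is positive semidefinite on `(0, b)`, so for real `λ` we get
`m ∫ₐᶜ |u λ|² ≤ ∫₀ᵇ (u λ)ᵀ H (u λ)`. The pairing is at most a constant times `∫ₐᶜ |u λ|`, and
Cauchy–Schwarz on `[a, c]` closes the estimate.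
-/

open intervalIntegral

section MatrixNorms

variable {n : Type*} [Fintype n] {𝕜 : Type*} [NormedRing 𝕜]

theorem norm_dotProduct_le (v w : n → 𝕜) : ‖v ⬝ᵥ w‖ ≤ Fintype.card n * ‖v‖ * ‖w‖ := by
  calc ‖v ⬝ᵥ w‖ ≤ ∑ i, ‖v i * w i‖ := norm_sum_le _ _
    _ ≤ ∑ _i : n, ‖v‖ * ‖w‖ := Finset.sum_le_sum fun i _ =>
        (norm_mul_le _ _).trans (mul_le_mul (norm_le_pi_norm v i) (norm_le_pi_norm w i)
          (norm_nonneg _) (norm_nonneg _))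
    _ = Fintype.card n * ‖v‖ * ‖w‖ := by simp [mul_assoc]

theorem norm_mulVec_le_sum_norm (A : Matrix n n 𝕜) (v : n → 𝕜) :
    ‖A *ᵥ v‖ ≤ (∑ i, ∑ j, ‖A i j‖) * ‖v‖ := by
  refine (pi_norm_le_iff_of_nonneg (by positivity)).2 fun i => ?_
  calc ‖(A *ᵥ v) i‖ ≤ ∑ j, ‖A i j * v j‖ := norm_sum_le _ _
    _ ≤ (∑ j, ‖A i j‖) * ‖v‖ := by
        rw [Finset.sum_mul]
        exact Finset.sum_le_sum fun j _ =>
          (norm_mul_le _ _).trans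
            (mul_le_mul_of_nonneg_left (norm_le_pi_norm v j) (norm_nonneg _))
    _ ≤ (∑ i, ∑ j, ‖A i j‖) * ‖v‖ := mul_le_mul_of_nonneg_right
        (Finset.single_le_sum (f := fun i => ∑ j, ‖A i j‖) (fun _ _ => by positivity)
          (Finset.mem_univ i)) (norm_nonneg v)

end MatrixNorms

section Integrability

variable {n : Type*} [Fintype n] {𝕜 : Type*} [NormedRing 𝕜] [SecondCountableTopology 𝕜]
  {M : ℝ → Matrix n n 𝕜} {v : ℝ → n → 𝕜} {s : Set ℝ}

theorem integrableOn_mulVec_of_continuousOn (hM : ∀ i j, IntegrableOn (fun x => M x i j) s)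
    (hv : ContinuousOn v s) (hs : IsCompact s) : IntegrableOn (fun x => M x *ᵥ v x) s :=
  integrable_pi_iff.2 fun i => integrable_finsetSum _ fun j _ =>
    (hM i j).mul_continuousOn ((continuous_apply j).comp_continuousOn hv) hs

theorem integrableOn_dotProduct_mulVec_of_continuousOn
    (hM : ∀ i j, IntegrableOn (fun x => M x i j) s) (hv : ContinuousOn v s) (hs : IsCompact s) :
    IntegrableOn (fun x => v x ⬝ᵥ M x *ᵥ v x) s := by
  have hMv : ∀ i, IntegrableOn (fun x => (M x *ᵥ v x) i) s :=
    integrable_pi_iff.1 (integrableOn_mulVec_of_continuousOn hM hv hs)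
  exact integrable_finsetSum (s := Finset.univ) (f := fun i x => v x i * (M x *ᵥ v x) i)
    fun i _ => IntegrableOn.continuousOn_mul ((continuous_apply i).comp_continuousOn hv)
      (hMv i) hs

end Integrability

theorem MeasureTheory.IntegrableOn.intervalIntegrable_of_mem_Icc {E : Type*}
    [NormedAddCommGroup E] {f : ℝ → E} {a b s t : ℝ} (hf : IntegrableOn f (Icc a b))
    (hs : s ∈ Icc a b) (ht : t ∈ Icc a b) : IntervalIntegrable f volume s t :=
  (hf.mono_set (uIcc_subset_Icc hs ht)).intervalIntegrable

section Gronwall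

variable {h v : ℝ → ℝ}

theorem le_two_mul_of_le_add_integral {y x : ℝ} (hyx : y ≤ x)
    (hh : IntegrableOn h (Icc y x)) (hh0 : ∀ s ∈ Icc y x, 0 ≤ h s)
    (hv : ContinuousOn v (Icc y x)) (hvy : 0 ≤ v y)
    (hle : ∀ t ∈ Icc y x, v t ≤ v y + ∫ r in y..t, h r * v r)
    (hhalf : ∫ r in y..x, h r ≤ 1 / 2) : v x ≤ 2 * v y := by
  obtain ⟨t, ht, hmax⟩ := isCompact_Icc.exists_isMaxOn (nonempty_Icc.2 hyx) hv
  have hy : y ∈ Icc y x := left_mem_Icc.2 hyx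
  have hsub : Icc y t ⊆ Icc y x := Icc_subset_Icc_right ht.2
  have hht : ∫ r in y..t, h r ≤ 1 / 2 := by
    refine le_trans (integral_mono_interval le_rfl ht.1 ht.2 ?_
      (hh.intervalIntegrable_of_mem_Icc hy (right_mem_Icc.2 hyx))) hhalf
    exact (ae_restrict_iff' measurableSet_Ioc).2
      (ae_of_all _ fun s hs => hh0 s (Ioc_subset_Icc_self hs))
  have hhv : ∫ r in y..t, h r * v r ≤ (∫ r in y..t, h r) * v t := by
    rw [← intervalIntegral.integral_mul_const]
    refine integral_mono_on ht.1
      ((hh.mul_continuousOn hv isCompact_Icc).intervalIntegrable_of_mem_Icc hy ht)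
      ((hh.intervalIntegrable_of_mem_Icc hy ht).mul_const _)
      fun s hs => mul_le_mul_of_nonneg_left (hmax (hsub hs)) (hh0 s (hsub hs))
  have hvt : 0 ≤ v t := hvy.trans (hmax hy)
  have hvx : v x ≤ v t := hmax (right_mem_Icc.2 hyx)
  nlinarith [hle t ht]

theorem le_two_pow_mul_of_le_add_integral {b : ℝ} {N : ℕ}
    (hh : IntegrableOn h (Icc 0 b)) (hh0 : ∀ s ∈ Icc 0 b, 0 ≤ h s)
    (hv : ContinuousOn v (Icc 0 b)) (hv0 : ∀ s ∈ Icc 0 b, 0 ≤ v s)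
    (hle : ∀ s ∈ Icc 0 b, ∀ t ∈ Icc s b, v t ≤ v s + ∫ r in s..t, h r * v r)
    (hN : ∫ r in 0..b, h r ≤ N / 2) : ∀ x ∈ Icc 0 b, v x ≤ 2 ^ (N + 1) * v 0 := by
  set G : ℝ → ℝ := fun x => ∫ r in 0..x, h r
  have hG0 : G 0 = 0 := integral_same
  have hG : ∀ y ∈ Icc 0 b, ∀ x ∈ Icc 0 b, ∫ r in y..x, h r = G x - G y := fun y hy x hx =>
    have h0 : (0 : ℝ) ∈ Icc 0 b := left_mem_Icc.2 (hy.1.trans hy.2)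
    (integral_interval_sub_left (hh.intervalIntegrable_of_mem_Icc h0 hx)
      (hh.intervalIntegrable_of_mem_Icc h0 hy)).symm
  have hstep : ∀ y ∈ Icc 0 b, ∀ x ∈ Icc y b, G x - G y ≤ 1 / 2 → v x ≤ 2 * v y := by
    intro y hy x hx hGyx
    have hsub : Icc y x ⊆ Icc 0 b := Icc_subset_Icc hy.1 hx.2
    exact le_two_mul_of_le_add_integral hx.1 (hh.mono_set hsub) (fun s hs => hh0 s (hsub hs))
      (hv.mono hsub) (hv0 y hy) (fun t ht => hle y hy t ⟨ht.1, ht.2.trans hx.2⟩)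
      ((hG y hy x (hsub (right_mem_Icc.2 hx.1))).trans_le hGyx)
  have hpieces : ∀ i : ℕ, ∀ x ∈ Icc 0 b, G x ≤ i / 2 → v x ≤ 2 ^ (i + 1) * v 0 := by
    intro i
    induction i with
    | zero =>
      intro x hx hGx
      have h0 : (0 : ℝ) ∈ Icc 0 b := left_mem_Icc.2 (hx.1.trans hx.2)
      simpa using hstep 0 h0 x hx (by rw [hG0]; push_cast at hGx; linarith)
    | succ i ih =>
      intro x hx hGx
      by_cases hGi : G x ≤ i / 2
      · have hv00 := hv0 0 (left_mem_Icc.2 (hx.1.trans hx.2))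
        calc v x ≤ 2 ^ (i + 1) * v 0 := ih x hx hGi
          _ ≤ 2 ^ (i + 1 + 1) * v 0 := by gcongr <;> norm_num
      have hGc : ContinuousOn G (Icc 0 x) := by
        rw [← uIcc_of_le hx.1]
        exact continuousOn_primitive_interval (hh.mono_set (uIcc_subset_Icc
          (left_mem_Icc.2 (hx.1.trans hx.2)) hx))
      obtain ⟨y, hy, hGy⟩ := intermediate_value_Icc hx.1 hGc
        ⟨hG0.trans_le (by positivity), (not_le.1 hGi).le⟩
      have hy' : y ∈ Icc 0 b := ⟨hy.1, hy.2.trans hx.2⟩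
      calc v x ≤ 2 * v y := hstep y hy' x ⟨hy.2, hx.2⟩ (by push_cast at hGx; linarith)
        _ ≤ 2 * (2 ^ (i + 1) * v 0) := by gcongr; exact ih y hy' hGy.le
        _ = 2 ^ (i + 1 + 1) * v 0 := by ring
  intro x hx
  refine hpieces N x hx (le_trans ?_ hN)
  have hxb := hG x hx b (right_mem_Icc.2 (hx.1.trans hx.2))
  have hxb0 : 0 ≤ ∫ r in x..b, h r :=
    integral_nonneg hx.2 fun s hs => hh0 s ⟨hx.1.trans hs.1, hs.2⟩
  simp only [G] at hxb ⊢
  linarith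

end Gronwall

section LinearSystems

variable {n : Type*} [Fintype n] {𝕜 : Type*} [RCLike 𝕜]

theorem norm_le_two_pow_mul_of_eq_add_integral_mulVec {A : ℝ → Matrix n n 𝕜}
    {u : ℝ → n → 𝕜} {u₀ : n → 𝕜} {b : ℝ} {N : ℕ}
    (hA : ∀ i j, IntegrableOn (fun s => A s i j) (Icc 0 b)) (hu : ContinuousOn u (Icc 0 b))
    (heq : ∀ x ∈ Icc 0 b, u x = u₀ + ∫ s in 0..x, A s *ᵥ u s)
    (hN : ∫ s in 0..b, ∑ i, ∑ j, ‖A s i j‖ ≤ N / 2) :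
    ∀ x ∈ Icc 0 b, ‖u x‖ ≤ 2 ^ (N + 1) * ‖u₀‖ := by
  set k : ℝ → ℝ := fun s => ∑ i, ∑ j, ‖A s i j‖
  have hk : IntegrableOn k (Icc 0 b) :=
    integrable_finsetSum _ fun i _ => integrable_finsetSum _ fun j _ => (hA i j).norm
  have hAu : IntegrableOn (fun s => A s *ᵥ u s) (Icc 0 b) :=
    integrableOn_mulVec_of_continuousOn hA hu isCompact_Icc
  have hle : ∀ s ∈ Icc 0 b, ∀ t ∈ Icc s b, ‖u t‖ ≤ ‖u s‖ + ∫ r in s..t, k r * ‖u r‖ := by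
    intro s hs t ht
    have ht' : t ∈ Icc 0 b := ⟨hs.1.trans ht.1, ht.2⟩
    have h0 : (0 : ℝ) ∈ Icc 0 b := left_mem_Icc.2 (hs.1.trans hs.2)
    have hdiff : u t - u s = ∫ r in s..t, A r *ᵥ u r := by
      rw [heq t ht', heq s hs, add_sub_add_left_eq_sub, integral_interval_sub_left
        (hAu.intervalIntegrable_of_mem_Icc h0 ht') (hAu.intervalIntegrable_of_mem_Icc h0 hs)]
    calc ‖u t‖ ≤ ‖u s‖ + ‖u t - u s‖ := norm_le_norm_add_norm_sub' _ _
      _ ≤ ‖u s‖ + ∫ r in s..t, k r * ‖u r‖ := by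
        rw [hdiff]
        gcongr
        refine norm_integral_le_of_norm_le ht.1
          (ae_of_all _ fun r _ => norm_mulVec_le_sum_norm _ _) ?_
        exact (hk.mul_continuousOn hu.norm isCompact_Icc).intervalIntegrable_of_mem_Icc hs ht'
  intro x hx
  have hu0 : u 0 = u₀ := by
    simpa using heq 0 (left_mem_Icc.2 (hx.1.trans hx.2))
  simpa [hu0] using le_two_pow_mul_of_le_add_integral hk
    (fun s _ => by positivity) hu.norm (fun s _ => norm_nonneg _) hle hN x hx

theorem exists_norm_le_two_pow_of_eq_add_smul_integral_mulVec {A : ℝ → Matrix n n 𝕜}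
    {u : 𝕜 → ℝ → n → 𝕜} {u₀ : n → 𝕜} {b : ℝ} {K : Set 𝕜} (hb : 0 ≤ b)
    (hK : Bornology.IsBounded K) (hA : ∀ i j, IntegrableOn (fun s => A s i j) (Icc 0 b))
    (hu : ∀ z ∈ K, ContinuousOn (u z) (Icc 0 b))
    (heq : ∀ z ∈ K, ∀ x ∈ Icc 0 b, u z x = u₀ + z • ∫ s in 0..x, A s *ᵥ u z s) :
    ∃ N : ℕ, ∀ z ∈ K, ∀ x ∈ Icc 0 b, ‖u z x‖ ≤ 2 ^ N * ‖u₀‖ := by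
  obtain ⟨R, hR⟩ := hK.exists_norm_le
  set k₀ := ∫ s in 0..b, ∑ i, ∑ j, ‖A s i j‖
  have hk₀ : 0 ≤ k₀ := integral_nonneg hb fun s _ => by positivity
  refine ⟨⌈2 * R * k₀⌉₊ + 1, fun z hz => ?_⟩
  refine norm_le_two_pow_mul_of_eq_add_integral_mulVec (A := fun s => z • A s)
    (fun i j => (hA i j).const_mul z) (hu z hz) (fun x hx => ?_) ?_
  · simp only [heq z hz x hx, Matrix.smul_mulVec, intervalIntegral.integral_smul]
  · calc ∫ s in 0..b, ∑ i, ∑ j, ‖(z • A s) i j‖ = ‖z‖ * k₀ := by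
          simp only [Matrix.smul_apply, smul_eq_mul, norm_mul, ← Finset.mul_sum,
            intervalIntegral.integral_const_mul, k₀]
      _ ≤ R * k₀ := by gcongr; exact hR z hz
      _ ≤ ⌈2 * R * k₀⌉₊ / 2 := by linarith [Nat.le_ceil (2 * R * k₀)]

end LinearSystems

theorem intervalIntegral_le_sqrt_mul_integral_sq {g : ℝ → ℝ} {a c : ℝ} (hac : a ≤ c)
    (hg : ContinuousOn g (Icc a c)) :
    ∫ x in a..c, g x ≤ √((c - a) * ∫ x in a..c, g x ^ 2) := by
  rw [← uIcc_of_le hac] at hg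
  have hg1 : IntervalIntegrable g volume a c := hg.intervalIntegrable
  have hg2 : IntervalIntegrable (fun x => g x ^ 2) volume a c := (hg.pow 2).intervalIntegrable
  refine Real.le_sqrt_of_sq_le ?_
  -- Cauchy–Schwarz from `0 ≤ ∫ (g - t)²` for every `t`, via the discriminant.
  have hquad : ∀ t : ℝ, 0 ≤ (c - a) * (t * t) + (-2 * ∫ x in a..c, g x) * t
      + ∫ x in a..c, g x ^ 2 := by
    intro t
    have hnonneg : 0 ≤ ∫ x in a..c, (g x - t) ^ 2 :=
      integral_nonneg hac fun x _ => sq_nonneg _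
    have hexp : ∫ x in a..c, (g x - t) ^ 2
        = ∫ x in a..c, (g x ^ 2 - 2 * t * g x + t ^ 2) := by
      congr 1; ext x; ring
    rw [hexp, integral_add (hg2.sub (hg1.const_mul _)) intervalIntegrable_const,
      integral_sub hg2 (hg1.const_mul _), intervalIntegral.integral_const_mul,
      intervalIntegral.integral_const, smul_eq_mul] at hnonneg
    linarith
  have := discrim_le_zero hquad
  rw [discrim] at this
  linarith

theorem mul_norm_sq_le_dotProduct_diag_mulVec {α β m : ℝ} (hm : 0 ≤ m) (hα : m ≤ α)
    (hβ : m ≤ β) (w : Fin 2 → ℝ) : m * ‖w‖ ^ 2 ≤ w ⬝ᵥ !![α, 0; 0, β] *ᵥ w := by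
  have hnorm : ‖w‖ ≤ √(w 0 ^ 2 + w 1 ^ 2) := by
    refine (pi_norm_le_iff_of_nonneg (Real.sqrt_nonneg _)).2 fun i => ?_
    rw [Real.norm_eq_abs]
    fin_cases i
    · exact Real.abs_le_sqrt (le_add_of_nonneg_right (sq_nonneg _))
    · exact Real.abs_le_sqrt (le_add_of_nonneg_left (sq_nonneg _))
  have hsq : ‖w‖ ^ 2 ≤ w 0 ^ 2 + w 1 ^ 2 :=
    (pow_le_pow_left₀ (norm_nonneg w) hnorm 2).trans (Real.sq_sqrt (by positivity)).le
  simp only [dotProduct, mulVec, Fin.sum_univ_two, cons_val', cons_val_zero, cons_val_one,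
    empty_val', cons_val_fin_one, of_apply]
  nlinarith [sq_nonneg (w 0), sq_nonneg (w 1)]

theorem integral_le_integral_of_le_of_subinterval {f g : ℝ → ℝ} {a b c d : ℝ} (hca : c ≤ a)
    (hab : a ≤ b) (hbd : b ≤ d) (hg : IntervalIntegrable g volume a b)
    (hf : IntervalIntegrable f volume c d) (hf0 : ∀ᵐ x, x ∈ Ioo c d → 0 ≤ f x)
    (hgf : ∀ᵐ x, x ∈ Icc a b → g x ≤ f x) : ∫ x in a..b, g x ≤ ∫ x in c..d, f x := by
  have hsub : uIcc a b ⊆ uIcc c d := by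
    rw [uIcc_of_le hab, uIcc_of_le (hca.trans (hab.trans hbd))]
    exact Icc_subset_Icc hca hbd
  have hf0' : 0 ≤ᵐ[volume.restrict (Ioc c d)] f :=
    (ae_restrict_congr_set Ioo_ae_eq_Ioc).1 ((ae_restrict_iff' measurableSet_Ioo).2 hf0)
  calc ∫ x in a..b, g x ≤ ∫ x in a..b, f x :=
        integral_mono_ae_restrict hab hg (hf.mono_set hsub)
          ((ae_restrict_iff' measurableSet_Icc).2 hgf)
    _ ≤ ∫ x in c..d, f x := integral_mono_interval hca hab hbd hf0' hf

theorem norm_integral_dotProduct_J2C_mulVec_le {u v : ℝ → Fin 2 → ℂ} {a c B : ℝ}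
    (hac : a ≤ c) (hu : ∀ x ∈ Icc a c, ‖u x‖ ≤ B) (hv : ContinuousOn v (Icc a c)) :
    ‖∫ x in a..c, u x ⬝ᵥ (J2C *ᵥ v x)‖ ≤ 4 * B * ∫ x in a..c, ‖v x‖ := by
  have hJ : ∑ i, ∑ j, ‖J2C i j‖ = 2 := by norm_num [J2C, Fin.sum_univ_two]
  rw [← intervalIntegral.integral_const_mul]
  refine norm_integral_le_of_norm_le hac (ae_of_all _ fun x hx => ?_)
    ((hv.norm.intervalIntegrable_of_Icc hac).const_mul _)
  have hB := hu x (Ioc_subset_Icc_self hx)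
  calc ‖u x ⬝ᵥ (J2C *ᵥ v x)‖ ≤ 2 * ‖u x‖ * ‖J2C *ᵥ v x‖ := by
        simpa using norm_dotProduct_le (u x) (J2C *ᵥ v x)
    _ ≤ 2 * B * (2 * ‖v x‖) := by
        gcongr
        · linarith [(norm_nonneg (u x)).trans hB]
        · exact (norm_mulVec_le_sum_norm J2C (v x)).trans_eq (by rw [hJ])
    _ = 4 * B * ‖v x‖ := by ring

theorem ofReal_dotProduct_cmat_mulVec (M : Matrix (Fin 2) (Fin 2) ℝ) (w : Fin 2 → ℝ) :
    (fun i => (w i : ℂ)) ⬝ᵥ cmat M *ᵥ (fun i => (w i : ℂ)) = ((w ⬝ᵥ M *ᵥ w : ℝ) : ℂ) := by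
  rw [show (fun i => (w i : ℂ)) = Complex.ofRealHom ∘ w from rfl, cmat,
    show Complex.ofReal = Complex.ofRealHom from rfl, RingHom.map_dotProduct]
  congr 1
  ext i
  exact (RingHom.map_mulVec _ M w i).symm

theorem norm_ofReal_comp {n : Type*} [Fintype n] (w : n → ℝ) : ‖fun i => (w i : ℂ)‖ = ‖w‖ := by
  simp [Pi.norm_def, Complex.nnnorm_real]

theorem mul_integral_norm_sq_le_re_integral_quadratic_form
    {H : ℝ → Matrix (Fin 2) (Fin 2) ℝ} {v : ℝ → Fin 2 → ℂ} {a b c α β m : ℝ}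
    (ha : 0 ≤ a) (hac : a ≤ c) (hcb : c ≤ b)
    (hHint : ∀ i j, IntegrableOn (fun x => H x i j) (Icc 0 b))
    (hH : ∀ᵐ x, x ∈ Ioo 0 b → (H x).PosSemidef)
    (hHdiag : ∀ᵐ x, x ∈ Icc a c → H x = !![α, 0; 0, β])
    (hm : 0 ≤ m) (hmα : m ≤ α) (hmβ : m ≤ β)
    (hv : ContinuousOn v (Icc 0 b)) (hvreal : ∀ x ∈ Icc 0 b, ∀ i, (v x i).im = 0) :
    m * ∫ x in a..c, ‖v x‖ ^ 2 ≤ (∫ x in 0..b, v x ⬝ᵥ cmat (H x) *ᵥ v x).re := by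
  have hb : 0 ≤ b := ha.trans (hac.trans hcb)
  have hsub : Icc a c ⊆ Icc 0 b := Icc_subset_Icc ha hcb
  set w : ℝ → Fin 2 → ℝ := fun x i => (v x i).re
  have hw : ∀ x ∈ Icc 0 b, v x = fun i => (w x i : ℂ) := fun x hx =>
    funext fun i => Complex.ext rfl (by simp [hvreal x hx i])
  have hwc : ContinuousOn w (Icc 0 b) :=
    (continuous_pi fun i => Complex.continuous_re.comp (continuous_apply i)).comp_continuousOn hv
  have hre :
      (∫ x in 0..b, v x ⬝ᵥ cmat (H x) *ᵥ v x).re = ∫ x in 0..b, w x ⬝ᵥ H x *ᵥ w x := by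
    rw [integral_congr (g := fun x => ((w x ⬝ᵥ H x *ᵥ w x : ℝ) : ℂ)), integral_ofReal,
      Complex.ofReal_re]
    intro x hx
    rw [uIcc_of_le hb] at hx
    simp only [hw x hx, ofReal_dotProduct_cmat_mulVec]
  rw [hre, ← intervalIntegral.integral_const_mul]
  refine integral_le_integral_of_le_of_subinterval ha hac hcb
    ((((hv.norm.pow 2).mono hsub).intervalIntegrable_of_Icc hac).const_mul m)
    ((integrableOn_dotProduct_mulVec_of_continuousOn hHint hwc isCompact_Icc
      ).intervalIntegrable_of_mem_Icc (left_mem_Icc.2 hb) (right_mem_Icc.2 hb))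
    (hH.mono fun x hx hxI => by simpa using (hx hxI).dotProduct_mulVec_nonneg (w x))
    (hHdiag.mono fun x hx hxI => ?_)
  rw [hx hxI, hw x (hsub hxI), norm_ofReal_comp]
  exact mul_norm_sq_le_dotProduct_diag_mulVec hm hmα hmβ (w x)

theorem pairing_bound_constant_case_general
    (b : ℝ)
    (H : ℝ → Matrix (Fin 2) (Fin 2) ℝ)
    (hHint : ∀ i j, IntegrableOn (fun x => H x i j) (Icc 0 b))
    (hH : ∀ᵐ x ∂volume, x ∈ Ioo 0 b → (H x).PosSemidef ∧ (H x).trace = 1)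
    (u : ℂ → ℝ → Fin 2 → ℂ)
    (hucont : ∀ z, ContinuousOn (u z) (Icc 0 b))
    (hueq : ∀ z, ∀ x ∈ Icc 0 b,
      u z x = ![1, 0] + z • ∫ s in (0:ℝ)..x, (J2C * cmat (H s)) *ᵥ u z s)
    (hureal : ∀ (t : ℝ), ∀ x ∈ Icc (0:ℝ) b, ∀ i, (u (t : ℂ) x i).im = 0)
    (a c g0 : ℝ) (ha : 0 < a) (hac : a < c) (hcb : c ≤ b)
    (hg0 : g0 ∈ Set.Ioo (-(1/2) : ℝ) (1/2))
    (hHconst : ∀ᵐ x ∂volume, x ∈ Icc a c → H x = !![1/2 + g0, 0; 0, 1/2 - g0]) :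
    ∀ K : Set ℂ, IsCompact K → ∃ C > 0, ∀ z ∈ K, ∀ lam : ℝ,
      ‖(∫ x in a..c, u z x ⬝ᵥ (J2C *ᵥ u (lam : ℂ) x))‖
        ≤ C * Real.sqrt
            (∫ x in (0:ℝ)..b, u (lam : ℂ) x ⬝ᵥ (cmat (H x) *ᵥ u (lam : ℂ) x)).re := by
  intro K hK
  have hb : 0 ≤ b := by linarith
  have hA : ∀ i j, IntegrableOn (fun s => (J2C * cmat (H s)) i j) (Icc 0 b) := fun i j => by
    simp only [mul_apply, cmat, map_apply]
    exact integrable_finsetSum _ fun k _ => (hHint k j).ofReal.const_mul _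
  obtain ⟨N, hN⟩ := exists_norm_le_two_pow_of_eq_add_smul_integral_mulVec hb hK.isBounded hA
    (fun z _ => hucont z) (fun z _ => hueq z)
  have h10 : ‖(![1, 0] : Fin 2 → ℂ)‖ ≤ 1 :=
    (pi_norm_le_iff_of_nonneg zero_le_one).2 fun i => by fin_cases i <;> simp
  set m := min (1 / 2 + g0) (1 / 2 - g0)
  have hm : 0 < m := lt_min (by linarith [hg0.1]) (by linarith [hg0.2])
  have hcam : 0 < (c - a) / m := div_pos (sub_pos.2 hac) hm
  refine ⟨4 * 2 ^ N * √((c - a) / m), mul_pos (by positivity) (Real.sqrt_pos.2 hcam),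
    fun z hz lam => ?_⟩
  have hsub : Icc a c ⊆ Icc 0 b := Icc_subset_Icc ha.le hcb
  have hlower := mul_integral_norm_sq_le_re_integral_quadratic_form ha.le hac.le hcb hHint
    (hH.mono fun x hx hxI => (hx hxI).1) hHconst hm.le (min_le_left _ _) (min_le_right _ _)
    (hucont lam) (hureal lam)
  have hpair := norm_integral_dotProduct_J2C_mulVec_le hac.le
    (fun x hx => (hN z hz x (hsub hx)).trans (mul_le_of_le_one_right (by positivity) h10))
    ((hucont lam).mono hsub)
  have hCS := intervalIntegral_le_sqrt_mul_integral_sq hac.le ((hucont lam).norm.mono hsub)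
  rw [mul_assoc, ← Real.sqrt_mul hcam.le]
  refine hpair.trans
    (mul_le_mul_of_nonneg_left (hCS.trans (Real.sqrt_le_sqrt ?_)) (by positivity))
  rw [div_mul_eq_mul_div, le_div_iff₀ hm, mul_assoc, mul_comm _ m]
  exact mul_le_mul_of_nonneg_left hlower (sub_pos.2 hac).le

/-- If `H = diag(1/2 + g₀, 1/2 - g₀)` a.e. on `[a,c] ⊂ (0,b]`, then for
every compact `K ⊂ ℂ` there is `C > 0` such that for all `z ∈ K` and `λ ∈ ℝ`,
`|∫ₐᶜ u(z,x)ᵀ 𝒥 u(λ,x) dx| ≤ C ‖u(λ,·)‖_{L²_H(0,b)}`. -/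
theorem pairing_bound_constant_case
    (b : ℝ) (hb : 0 < b)
    (H : ℝ → Matrix (Fin 2) (Fin 2) ℝ)
    (hHint : ∀ i j, IntegrableOn (fun x => H x i j) (Icc 0 b))
    (hH : ∀ᵐ x ∂volume, x ∈ Ioo 0 b → (H x).PosSemidef ∧ (H x).trace = 1)
    (u : ℂ → ℝ → Fin 2 → ℂ)
    (hucont : ∀ z, ContinuousOn (u z) (Icc 0 b))
    (hueq : ∀ z, ∀ x ∈ Icc 0 b,
      u z x = ![1, 0] + z • ∫ s in (0:ℝ)..x, (J2C * cmat (H s)) *ᵥ u z s)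
    (hureal : ∀ (t : ℝ), ∀ x ∈ Icc (0:ℝ) b, ∀ i, (u (t : ℂ) x i).im = 0)
    (a c g0 : ℝ) (ha : 0 < a) (hac : a < c) (hcb : c ≤ b)
    (hg0 : g0 ∈ Set.Ioo (-(1/2) : ℝ) (1/2))
    (hHconst : ∀ᵐ x ∂volume, x ∈ Icc a c → H x = !![1/2 + g0, 0; 0, 1/2 - g0]) :
    ∀ K : Set ℂ, IsCompact K → ∃ C > 0, ∀ z ∈ K, ∀ lam : ℝ,
      ‖(∫ x in a..c, u z x ⬝ᵥ (J2C *ᵥ u (lam : ℂ) x))‖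
        ≤ C * Real.sqrt
            (∫ x in (0:ℝ)..b, u (lam : ℂ) x ⬝ᵥ (cmat (H x) *ᵥ u (lam : ℂ) x)).re :=
  pairing_bound_constant_case_general b H hHint hH u hucont hueq hureal a c g0 ha hac hcb hg0
    hHconst
end
end

section
/- (Integral identity in the proof of Lemma 4.3.) Let a < c, δ > 0, λ ∈ ℝ with λ ≠ 0. Let g : [a,c] → ℝ be absolutely continuous with integrable derivative g' and |g(x)| ≤ 1/2 - δ for all x ∈ [a,c], and let θ : [a,c] → ℝ be absolutely continuous with θ'(s) = λ(1/2 + g(s) cos 2θ(s)) a.e. Then for every x ∈ [a,c], ∫ₐˣ g(s) sin 2θ(s) ds = (1/(2λ)) · log( (1 + 2g(a) cos 2θ(a)) / (1 + 2g(x) cos 2θ(x)) ) + (1/λ) · ∫ₐˣ g'(s) cos 2θ(s) / (1 + 2g(s) cos 2θ(s)) ds. -/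
/-!
Write `w = 1 + 2 g cos 2θ`; the bound on `g` gives `w ≥ 2δ`. The Prüfer equation makes
`(cos 2θ)' = -λ w sin 2θ`, so almost everywhere `(log w)' = 2 g' cos 2θ / w - 2λ g sin 2θ`.
Both `g` and `θ` are absolutely continuous, hence so are `w` and, `w` being bounded away from `0`,
`log w`; the fundamental theorem of calculus for absolutely continuous functions then integrates
this derivative, and dividing by `2λ` gives the identity.
-/

open MeasureTheory Set

theorem Real.lipschitzOnWith_log_Ici {m : ℝ} (hm : 0 < m) :
    LipschitzOnWith (Real.toNNReal m⁻¹) Real.log (Ici m) := by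
  refine (convex_Ici m).lipschitzOnWith_of_nnnorm_hasDerivWithin_le
    (fun x hx => (Real.hasDerivAt_log (hm.trans_le hx).ne').hasDerivWithinAt) fun x hx => ?_
  rw [← NNReal.coe_le_coe, coe_nnnorm, Real.coe_toNNReal _ (inv_nonneg.2 hm.le), Real.norm_eq_abs,
    abs_inv, abs_of_pos (hm.trans_le hx)]
  exact inv_anti₀ hm hx

namespace AbsolutelyContinuousOnInterval

variable {X Y : Type*} [PseudoMetricSpace X] [PseudoMetricSpace Y] {a b : ℝ}

theorem congr {f g : ℝ → X} (hf : AbsolutelyContinuousOnInterval f a b)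
    (hfg : EqOn f g (uIcc a b)) : AbsolutelyContinuousOnInterval g a b := by
  rw [absolutelyContinuousOnInterval_iff] at hf ⊢
  intro ε hε
  obtain ⟨δ, hδ, hfδ⟩ := hf ε hε
  refine ⟨δ, hδ, fun E hE hlen => ?_⟩
  convert hfδ E hE hlen using 1
  refine Finset.sum_congr rfl fun i hi => ?_
  rw [hfg (hE.1 i hi).1, hfg (hE.1 i hi).2]

theorem const_add {F : Type*} [SeminormedAddCommGroup F] {f : ℝ → F} (c : F)
    (hf : AbsolutelyContinuousOnInterval f a b) :
    AbsolutelyContinuousOnInterval (fun x => c + f x) a b := by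
  simpa only [AbsolutelyContinuousOnInterval, dist_add_left] using hf

theorem _root_.LipschitzOnWith.comp_absolutelyContinuousOnInterval {f : ℝ → X} {φ : X → Y}
    {K : NNReal} {s : Set X} (hφ : LipschitzOnWith K φ s)
    (hf : AbsolutelyContinuousOnInterval f a b) (hfs : MapsTo f (uIcc a b) s) :
    AbsolutelyContinuousOnInterval (φ ∘ f) a b := by
  rw [absolutelyContinuousOnInterval_iff] at hf ⊢
  intro ε hε
  obtain ⟨δ, hδ, hfδ⟩ := hf (ε / (K + 1)) (by positivity)
  refine ⟨δ, hδ, fun E hE hlen => ?_⟩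
  calc ∑ i ∈ Finset.range E.1, dist (φ (f (E.2 i).1)) (φ (f (E.2 i).2))
      ≤ ∑ i ∈ Finset.range E.1, K * dist (f (E.2 i).1) (f (E.2 i).2) :=
        Finset.sum_le_sum fun i hi =>
          hφ.dist_le_mul _ (hfs (hE.1 i hi).1) _ (hfs (hE.1 i hi).2)
    _ = K * ∑ i ∈ Finset.range E.1, dist (f (E.2 i).1) (f (E.2 i).2) := (Finset.mul_sum ..).symm
    _ ≤ K * (ε / (K + 1)) := by gcongr; exact (hfδ E hE hlen).le
    _ < ε := by
      rw [mul_div_assoc', div_lt_iff₀ (by positivity)]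
      nlinarith

theorem log {f : ℝ → ℝ} (hf : AbsolutelyContinuousOnInterval f a b)
    (hpos : ∀ x ∈ uIcc a b, 0 < f x) :
    AbsolutelyContinuousOnInterval (fun x => Real.log (f x)) a b := by
  obtain ⟨x₀, hx₀, hmin⟩ := isCompact_uIcc.exists_isMinOn nonempty_uIcc hf.continuousOn
  exact (Real.lipschitzOnWith_log_Ici (hpos x₀ hx₀)).comp_absolutelyContinuousOnInterval hf
    fun x hx => hmin hx

theorem integral_eq_sub_of_ae_hasDerivAt {f f' : ℝ → ℝ}
    (hf : AbsolutelyContinuousOnInterval f a b)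
    (hf' : ∀ᵐ x, x ∈ uIcc a b → HasDerivAt f (f' x) x) :
    ∫ x in a..b, f' x = f b - f a := by
  rw [← hf.integral_deriv_eq_sub]
  refine intervalIntegral.integral_congr_ae ?_
  filter_upwards [hf'] with x hx hxab
  exact (hx (uIoc_subset_uIcc hxab)).deriv.symm

end AbsolutelyContinuousOnInterval

section Primitive

variable {F f : ℝ → ℝ} {a b : ℝ}

theorem AbsolutelyContinuousOnInterval.of_eq_add_integral (hf : IntervalIntegrable f volume a b)
    (hab : a ≤ b) (hF : ∀ x ∈ Icc a b, F x = F a + ∫ t in a..x, f t) :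
    AbsolutelyContinuousOnInterval F a b := by
  refine ((hf.absolutelyContinuousOnInterval_intervalIntegral left_mem_uIcc).const_add (F a)).congr
    fun x hx => ?_
  rw [uIcc_of_le hab] at hx
  exact (hF x hx).symm

theorem ae_hasDerivAt_of_eq_add_integral (hf : IntervalIntegrable f volume a b)
    (hF : ∀ x ∈ Icc a b, F x = F a + ∫ t in a..x, f t) :
    ∀ᵐ x, x ∈ Icc a b → HasDerivAt F (f x) x := by
  have ha : ∀ᵐ x, x ≠ a := by simp [ae_iff, measure_singleton]
  have hb : ∀ᵐ x, x ≠ b := by simp [ae_iff, measure_singleton]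
  filter_upwards [hf.ae_hasDerivAt_integral, ha, hb] with x hx hxa hxb hxab
  have hnhds : Icc a b ∈ nhds x := Icc_mem_nhds (hxab.1.lt_of_ne' hxa) (hxab.2.lt_of_ne hxb)
  refine ((hx (Icc_subset_uIcc hxab) a left_mem_uIcc).const_add (F a)).congr_of_eventuallyEq ?_
  filter_upwards [hnhds] with y hy using hF y hy

end Primitive

theorem two_mul_le_one_add_two_mul_mul {δ y u : ℝ} (hy : |y| ≤ 1 / 2 - δ) (hu : |u| ≤ 1) :
    2 * δ ≤ 1 + 2 * y * u := by
  have : |y * u| ≤ 1 / 2 - δ := by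
    rw [abs_mul]; nlinarith [abs_nonneg y, abs_nonneg u]
  linarith [(abs_le.1 this).1]

theorem hasDerivAt_log_pruefer_weight {g θ : ℝ → ℝ} {lam g' s : ℝ} (hg : HasDerivAt g g' s)
    (hθ : HasDerivAt θ (lam * (1 / 2 + g s * Real.cos (2 * θ s))) s)
    (hw : 1 + 2 * g s * Real.cos (2 * θ s) ≠ 0) :
    HasDerivAt (fun t => Real.log (1 + 2 * g t * Real.cos (2 * θ t)))
      (2 * (g' * Real.cos (2 * θ s) / (1 + 2 * g s * Real.cos (2 * θ s)))
        - 2 * lam * (g s * Real.sin (2 * θ s))) s := by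
  convert (((hg.const_mul 2).fun_mul (hθ.const_mul 2).cos).const_add 1).log hw using 1
  rw [eq_div_iff hw, sub_mul, mul_assoc 2, div_mul_cancel₀ _ hw]
  ring

theorem log_pruefer_weight_sub_eq_integral {a b lam : ℝ} {g gd θ : ℝ → ℝ} (hab : a ≤ b)
    (hgd : IntervalIntegrable gd volume a b) (hg : ∀ x ∈ Icc a b, g x = g a + ∫ s in a..x, gd s)
    (hθc : ContinuousOn θ (Icc a b))
    (hθ : ∀ x ∈ Icc a b, θ x = θ a + ∫ s in a..x, lam * (1 / 2 + g s * Real.cos (2 * θ s)))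
    (hw : ∀ x ∈ Icc a b, 0 < 1 + 2 * g x * Real.cos (2 * θ x)) :
    Real.log (1 + 2 * g b * Real.cos (2 * θ b)) - Real.log (1 + 2 * g a * Real.cos (2 * θ a))
      = 2 * (∫ s in a..b, gd s * Real.cos (2 * θ s) / (1 + 2 * g s * Real.cos (2 * θ s)))
          - 2 * lam * ∫ s in a..b, g s * Real.sin (2 * θ s) := by
  have hgAC := AbsolutelyContinuousOnInterval.of_eq_add_integral hgd hab hg
  have hgc : ContinuousOn g (Icc a b) := uIcc_of_le hab ▸ hgAC.continuousOn
  have hθ' : IntervalIntegrable (fun s => lam * (1 / 2 + g s * Real.cos (2 * θ s))) volume a b :=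
    ContinuousOn.intervalIntegrable (by rw [uIcc_of_le hab]; fun_prop)
  have hcosAC : AbsolutelyContinuousOnInterval (fun s => Real.cos (2 * θ s)) a b :=
    Real.lipschitzWith_cos.lipschitzOnWith.comp_absolutelyContinuousOnInterval
      ((AbsolutelyContinuousOnInterval.of_eq_add_integral hθ' hab hθ).const_mul 2)
      (mapsTo_univ _ _)
  have hlogAC : AbsolutelyContinuousOnInterval
      (fun s => Real.log (1 + 2 * g s * Real.cos (2 * θ s))) a b :=
    ((hgAC.const_mul 2).fun_mul hcosAC).const_add 1 |>.log (uIcc_of_le hab ▸ hw)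
  have hA : IntervalIntegrable
      (fun s => gd s * Real.cos (2 * θ s) / (1 + 2 * g s * Real.cos (2 * θ s))) volume a b := by
    have hcw : ContinuousOn (fun s => Real.cos (2 * θ s) / (1 + 2 * g s * Real.cos (2 * θ s)))
        (uIcc a b) :=
      uIcc_of_le hab ▸ ContinuousOn.div (by fun_prop) (by fun_prop) fun s hs => (hw s hs).ne'
    simpa only [mul_div_assoc] using hgd.mul_continuousOn hcw
  have hB : IntervalIntegrable (fun s => g s * Real.sin (2 * θ s)) volume a b :=
    ContinuousOn.intervalIntegrable (uIcc_of_le hab ▸ by fun_prop)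
  rw [← intervalIntegral.integral_const_mul, ← intervalIntegral.integral_const_mul,
    ← intervalIntegral.integral_sub (hA.const_mul 2) (hB.const_mul _)]
  refine (hlogAC.integral_eq_sub_of_ae_hasDerivAt ?_).symm
  filter_upwards [ae_hasDerivAt_of_eq_add_integral hgd hg,
    ae_hasDerivAt_of_eq_add_integral hθ' hθ] with s hgs hθs hs
  rw [uIcc_of_le hab] at hs
  exact hasDerivAt_log_pruefer_weight (hgs hs) (hθs hs) (hw s hs).ne'

theorem pruefer_integral_identity_general
    (a c δ lam : ℝ) (hδ : 0 < δ) (hlam : lam ≠ 0)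
    (g gd : ℝ → ℝ)
    (hgdint : IntegrableOn gd (Icc a c))
    (hg : ∀ x ∈ Icc a c, g x = g a + ∫ s in a..x, gd s)
    (hgbd : ∀ x ∈ Icc a c, |g x| ≤ 1/2 - δ)
    (θ : ℝ → ℝ) (hθc : ContinuousOn θ (Icc a c))
    (hθ : ∀ x ∈ Icc a c,
      θ x = θ a + ∫ s in a..x, lam * (1/2 + g s * Real.cos (2 * θ s))) :
    ∀ x ∈ Icc a c,
      ∫ s in a..x, g s * Real.sin (2 * θ s)
        = (1 / (2 * lam)) *
            Real.log ((1 + 2 * g a * Real.cos (2 * θ a)) /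
              (1 + 2 * g x * Real.cos (2 * θ x)))
          + (1 / lam) *
              ∫ s in a..x, gd s * Real.cos (2 * θ s) /
                (1 + 2 * g s * Real.cos (2 * θ s)) := by
  intro x ⟨hax, hxc⟩
  have hsub : Icc a x ⊆ Icc a c := Icc_subset_Icc_right hxc
  have hw : ∀ s ∈ Icc a x, 0 < 1 + 2 * g s * Real.cos (2 * θ s) := fun s hs => by
    linarith [two_mul_le_one_add_two_mul_mul (hgbd s (hsub hs)) (Real.abs_cos_le_one (2 * θ s))]
  have hgd : IntervalIntegrable gd volume a x :=
    (intervalIntegrable_iff_integrableOn_Icc_of_le hax).2 (hgdint.mono_set hsub)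
  have hlog := log_pruefer_weight_sub_eq_integral hax hgd (fun s hs => hg s (hsub hs))
    (hθc.mono hsub) (fun s hs => hθ s (hsub hs)) hw
  rw [Real.log_div (hw a ⟨le_rfl, hax⟩).ne' (hw x ⟨hax, le_rfl⟩).ne']
  linear_combination (norm := skip) (1 / (2 * lam)) * hlog
  field_simp
  ring

/-- integral identity in the proof of Lemma 4.3. For an absolutely
continuous `g` with `|g| ≤ 1/2 - δ` and a Prüfer angle `θ` with
`θ' = λ(1/2 + g cos 2θ)` a.e., for every `x ∈ [a,c]`,
`∫ₐˣ g sin 2θ = (1/(2λ)) log((1 + 2g(a)cos 2θ(a))/(1 + 2g(x)cos 2θ(x)))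
  + (1/λ) ∫ₐˣ g' cos 2θ / (1 + 2g cos 2θ)`. -/
theorem pruefer_integral_identity
    (a c δ lam : ℝ) (hac : a < c) (hδ : 0 < δ) (hlam : lam ≠ 0)
    (g gd : ℝ → ℝ)
    (hgdint : IntegrableOn gd (Icc a c))
    (hg : ∀ x ∈ Icc a c, g x = g a + ∫ s in a..x, gd s)
    (hgbd : ∀ x ∈ Icc a c, |g x| ≤ 1/2 - δ)
    (θ : ℝ → ℝ) (hθc : ContinuousOn θ (Icc a c))
    (hθ : ∀ x ∈ Icc a c,
      θ x = θ a + ∫ s in a..x, lam * (1/2 + g s * Real.cos (2 * θ s))) :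
    ∀ x ∈ Icc a c,
      ∫ s in a..x, g s * Real.sin (2 * θ s)
        = (1 / (2 * lam)) *
            Real.log ((1 + 2 * g a * Real.cos (2 * θ a)) /
              (1 + 2 * g x * Real.cos (2 * θ x)))
          + (1 / lam) *
              ∫ s in a..x, gd s * Real.cos (2 * θ s) /
                (1 + 2 * g s * Real.cos (2 * θ s)) :=
  pruefer_integral_identity_general a c δ lam hδ hlam g gd hgdint hg hgbd θ hθc hθ
end

section
/- (Norm computation for the Airy-type example.) Let f : ℝ → ℝ be twice differentiable with f''(y) = y·f(y) for all y, f(0) = 0 and f'(0) = 1. Then for all λ > 0 and b > 0: ∫₀^b [ f'(-λ^{2/3}x)² + λ^{2/3}·x·f(-λ^{2/3}x)² ] dx = (λ^{-2/3}/3)·[ 2(λ^{2/3}b)²·f(-λ^{2/3}b)² + 2λ^{2/3}b·f'(-λ^{2/3}b)² - f(-λ^{2/3}b)·f'(-λ^{2/3}b) ]. -/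
/-!
Along a solution of `f'' = y f`, the quadratic form `f'² - y f²` has the explicit primitive
`(2y f'² + f f' - 2y² f²) / 3`, which vanishes at `y = 0` when `f(0) = 0`. The substitution
`y = -λ^{2/3} x` turns the integrand into `f'(y)² - y f(y)²`, so the integral is minus this
primitive at `-λ^{2/3} b`, divided by `λ^{2/3}`.
-/

open intervalIntegral

noncomputable def airyPrimitive (f df : ℝ → ℝ) (y : ℝ) : ℝ :=
  (2 * y * df y ^ 2 + f y * df y - 2 * y ^ 2 * f y ^ 2) / 3

theorem hasDerivAt_airyPrimitive {f df : ℝ → ℝ} {y : ℝ}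
    (hf : HasDerivAt f (df y) y) (hdf : HasDerivAt df (y * f y) y) :
    HasDerivAt (airyPrimitive f df) (df y ^ 2 - y * f y ^ 2) y := by
  have hy := hasDerivAt_id' y
  have h := ((((hy.const_mul 2).fun_mul (hdf.fun_pow 2)).fun_add (hf.fun_mul hdf)).fun_sub
    ((hy.fun_pow 2).const_mul 2 |>.fun_mul (hf.fun_pow 2))).div_const 3
  exact h.congr_deriv (by ring)

theorem integral_deriv_sq_sub_mul_sq_eq_airyPrimitive {f df : ℝ → ℝ}
    (hf : ∀ y, HasDerivAt f (df y) y) (hdf : ∀ y, HasDerivAt df (y * f y) y) (a b : ℝ) :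
    ∫ y in a..b, (df y ^ 2 - y * f y ^ 2) = airyPrimitive f df b - airyPrimitive f df a := by
  have hfc : Continuous f := continuous_iff_continuousAt.2 fun y => (hf y).continuousAt
  have hdfc : Continuous df := continuous_iff_continuousAt.2 fun y => (hdf y).continuousAt
  have hcont : Continuous fun y => df y ^ 2 - y * f y ^ 2 := by fun_prop
  exact integral_eq_sub_of_hasDerivAt (fun y _ => hasDerivAt_airyPrimitive (hf y) (hdf y))
    (hcont.intervalIntegrable a b)

theorem airy_norm_computation_general
    (f df : ℝ → ℝ)
    (hf : ∀ y, HasDerivAt f (df y) y)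
    (hdf : ∀ y, HasDerivAt df (y * f y) y)
    (hf0 : f 0 = 0) :
    ∀ lam b : ℝ, 0 < lam → 0 < b →
      ∫ x in (0:ℝ)..b,
          ((df (-(lam ^ ((2:ℝ)/3)) * x))^2
            + lam ^ ((2:ℝ)/3) * x * (f (-(lam ^ ((2:ℝ)/3)) * x))^2)
        = (lam ^ (-(2:ℝ)/3) / 3) *
            (2 * (lam ^ ((2:ℝ)/3) * b)^2 * (f (-(lam ^ ((2:ℝ)/3)) * b))^2
              + 2 * lam ^ ((2:ℝ)/3) * b * (df (-(lam ^ ((2:ℝ)/3)) * b))^2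
              - f (-(lam ^ ((2:ℝ)/3)) * b) * df (-(lam ^ ((2:ℝ)/3)) * b)) := by
  intro lam b hlam _
  set c : ℝ := lam ^ ((2:ℝ)/3)
  have hc : c ≠ 0 := (Real.rpow_pos_of_pos hlam _).ne'
  have hinv : lam ^ (-(2:ℝ)/3) = c⁻¹ := by
    rw [neg_div, Real.rpow_neg hlam.le]
  have hsubst : ∫ x in (0:ℝ)..b, (df (-c * x) ^ 2 + c * x * f (-c * x) ^ 2)
      = ∫ x in (0:ℝ)..b, (fun y => df y ^ 2 - y * f y ^ 2) (-c * x) := by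
    congr 1; ext x; ring
  rw [hsubst, integral_comp_mul_left (fun y => df y ^ 2 - y * f y ^ 2) (neg_ne_zero.2 hc),
    integral_symm, mul_zero, integral_deriv_sq_sub_mul_sq_eq_airyPrimitive hf hdf, hinv]
  simp only [airyPrimitive, hf0, smul_eq_mul]
  field_simp
  ring

/-- norm computation for the Airy-type example. With `f'' = y f`,
`f(0) = 0`, `f'(0) = 1`, for all `λ, b > 0`:
`∫₀ᵇ [f'(-λ^{2/3}x)² + λ^{2/3} x f(-λ^{2/3}x)²] dx
  = (λ^{-2/3}/3) [2(λ^{2/3}b)² f(-λ^{2/3}b)² + 2λ^{2/3}b f'(-λ^{2/3}b)²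
    - f(-λ^{2/3}b) f'(-λ^{2/3}b)]`. -/
theorem airy_norm_computation
    (f df : ℝ → ℝ)
    (hf : ∀ y, HasDerivAt f (df y) y)
    (hdf : ∀ y, HasDerivAt df (y * f y) y)
    (hf0 : f 0 = 0) (hdf0 : df 0 = 1) :
    ∀ lam b : ℝ, 0 < lam → 0 < b →
      ∫ x in (0:ℝ)..b,
          ((df (-(lam ^ ((2:ℝ)/3)) * x))^2
            + lam ^ ((2:ℝ)/3) * x * (f (-(lam ^ ((2:ℝ)/3)) * x))^2)
        = (lam ^ (-(2:ℝ)/3) / 3) *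
            (2 * (lam ^ ((2:ℝ)/3) * b)^2 * (f (-(lam ^ ((2:ℝ)/3)) * b))^2
              + 2 * lam ^ ((2:ℝ)/3) * b * (df (-(lam ^ ((2:ℝ)/3)) * b))^2
              - f (-(lam ^ ((2:ℝ)/3)) * b) * df (-(lam ^ ((2:ℝ)/3)) * b)) :=
  airy_norm_computation_general f df hf hdf hf0
end

section
/- (Trace normalization of canonical systems.) Let b > 0 and let H : [0,b] → Matrix (Fin 2) (Fin 2) ℝ be integrable, a.e. symmetric positive semidefinite, with trace H(x) > 0 a.e. Let y(x) = ∫₀ˣ trace H(s) ds, set b₁ = y(b), and let x(·) : [0,b₁] → [0,b] be the inverse of the (continuous, strictly increasing) function y. Define H₁(t) = H(x(t)) / trace H(x(t)) for t ∈ [0,b₁]. If z ∈ ℂ and u : [0,b] → ℂ² is the continuous solution of u(x) = (1,0)ᵀ + z·∫₀ˣ 𝒥 H(s) u(s) ds, then v(t) := u(x(t)) is the continuous solution on [0,b₁] of v(t) = (1,0)ᵀ + z·∫₀ᵗ 𝒥 H₁(s) v(s) ds; that is, v solves the trace-normalized canonical system 𝒥 v' = -z H₁ v with v(0) = (1,0)ᵀ,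 and trace H₁(t) = 1 a.e. -/
open MeasureTheory Matrix Set

noncomputable section

/-!
The primitive `y` of the a.e. positive density `w = trace H` is a strictly increasing
homeomorphism of `[0, b]` onto `[0, b₁]`, and it pushes the measure `w(x) dx` on `(0, c]` forward to
Lebesgue measure on `(0, y c]`: both measures have the distribution function `y`. Read backwards,
`x(·)` pushes Lebesgue measure forward to `w(x) dx`, which is the change of variables
`∫₀ᵗ f(x(s)) / w(x(s)) ds = ∫₀^{x(t)} f`. With `f = 𝒥 H u` it turns the integral equation of `u`
into that of `u ∘ x(·)`, and since `w(x) dx ≪ dx`, it also shows that `w(x(t)) > 0`, i.e.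
`trace H₁(t) = 1`, for a.e. `t`.
-/

theorem integrableOn_trace {α n E : Type*} [MeasurableSpace α] {μ : Measure α} {s : Set α}
    [Fintype n] [NormedAddCommGroup E] {H : α → Matrix n n E}
    (hH : ∀ i j, IntegrableOn (fun x => H x i j) s μ) :
    IntegrableOn (fun x => (H x).trace) s μ :=
  integrable_finsetSum Finset.univ fun i _ => hH i i

-- `Matrix n m E` carries no measurable space, so the entries are assembled in the pi type.
theorem aestronglyMeasurable_matrix_of_entries {α n m E : Type*} [MeasurableSpace α]
    {μ : Measure α} [Countable n] [Countable m] [NormedAddCommGroup E] [MeasurableSpace E]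
    [BorelSpace E] [SecondCountableTopology E] {H : α → Matrix n m E}
    (hH : ∀ i j, AEMeasurable (fun x => H x i j) μ) : AEStronglyMeasurable H μ :=
  (aemeasurable_pi_iff.2 fun i => aemeasurable_pi_iff.2 fun j => hH i j :
    AEMeasurable (fun x i j => H x i j : α → n → m → E) μ).aestronglyMeasurable

theorem intervalIntegral.continuousOn_primitive_of_integrableOn_Icc {w : ℝ → ℝ} {a b : ℝ}
    (hw : IntegrableOn w (Icc a b)) : ContinuousOn (fun x => ∫ s in a..x, w s) (Icc a b) :=
  (intervalIntegral.continuousOn_primitive hw).congr fun _ hx =>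
    intervalIntegral.integral_of_le hx.1

theorem strictMonoOn_primitive_of_ae_pos {w : ℝ → ℝ} {a b : ℝ} (hw : IntegrableOn w (Icc a b))
    (hpos : ∀ᵐ x, x ∈ Icc a b → 0 < w x) :
    StrictMonoOn (fun x => ∫ s in a..x, w s) (Icc a b) := by
  intro x₁ h₁ x₂ h₂ hlt
  have hint : ∀ x ∈ Icc a b, IntervalIntegrable w volume a x := fun x hx =>
    (intervalIntegrable_iff_integrableOn_Icc_of_le hx.1).2
      (hw.mono_set (Icc_subset_Icc_right hx.2))
  have hpos' : ∀ᵐ x ∂volume.restrict (Ioc x₁ x₂), 0 < w x := by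
    rw [ae_restrict_iff' measurableSet_Ioc]
    exact hpos.mono fun x hx hx' => hx ⟨h₁.1.trans hx'.1.le, hx'.2.trans h₂.2⟩
  have hne : volume.restrict (Ioc x₁ x₂) {x | 0 < w x} ≠ 0 := fun h => by
    have huniv := measure_mono_null (s := univ) (fun x _ => em (0 < w x))
      (measure_union_null h (ae_iff.1 hpos'))
    rw [Measure.restrict_apply_univ, Real.volume_Ioc, ENNReal.ofReal_eq_zero] at huniv
    linarith
  rw [← sub_pos, intervalIntegral.integral_interval_sub_left (hint x₂ h₂) (hint x₁ h₁)]
  simpa using intervalIntegral.integral_lt_integral_of_ae_le_of_measure_setOfPred_lt_ne_zero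
    hlt.le intervalIntegrable_const ((hint x₁ h₁).symm.trans (hint x₂ h₂))
    (hpos'.mono fun x hx => hx.le) hne

theorem MonotoneOn.continuousOn_of_surjOn_Icc {α β : Type*} [LinearOrder α] [TopologicalSpace α]
    [OrderTopology α] [LinearOrder β] [TopologicalSpace β] [OrderTopology β] [DenselyOrdered β]
    {f : α → β} {a b : α} {c d : β} (hf : MonotoneOn f (Icc a b))
    (hmaps : MapsTo f (Icc a b) (Icc c d)) (hsurj : SurjOn f (Icc a b) (Icc c d)) :
    ContinuousOn f (Icc a b) := by
  rw [continuousOn_iff_continuous_domRestrict]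
  exact continuous_subtype_val.comp <| Monotone.continuous_of_surjective
    (f := hmaps.restrict f (Icc a b) (Icc c d)) (fun x y hxy => hf x.2 y.2 hxy)
    (hmaps.restrict_surjective_iff.2 hsurj)

theorem withDensity_ofReal_apply_Ioc {w : ℝ → ℝ} {s : Set ℝ} {a r : ℝ} (har : a ≤ r)
    (hs : Ioc a r ⊆ s) (hw : IntegrableOn w (Ioc a r)) (hw0 : 0 ≤ᵐ[volume.restrict (Ioc a r)] w) :
    (volume.restrict s).withDensity (fun x => ENNReal.ofReal (w x)) (Ioc a r) =
      ENNReal.ofReal (∫ x in a..r, w x) := by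
  rw [withDensity_apply _ measurableSet_Ioc, Measure.restrict_restrict measurableSet_Ioc,
    inter_eq_left.2 hs, intervalIntegral.integral_of_le har,
    ofReal_integral_eq_lintegral_ofReal hw hw0]

theorem map_eq_volume_restrict_Ioc_of_cdf {μ : Measure ℝ} {y : ℝ → ℝ} {c : ℝ} (hc : 0 ≤ c)
    (hμ : ∀ᵐ x ∂μ, x ∈ Ioc 0 c) (hyc : ContinuousOn y (Icc 0 c))
    (hys : StrictMonoOn y (Icc 0 c)) (hy0 : y 0 = 0)
    (hμy : ∀ r ∈ Icc 0 c, μ (Ioc 0 r) = ENNReal.ofReal (y r)) :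
    μ.map y = volume.restrict (Ioc 0 (y c)) := by
  have hμc : μ.restrict (Ioc 0 c) = μ := Measure.restrict_eq_self_of_ae_mem hμ
  have hy : AEMeasurable y μ :=
    hμc ▸ (hyc.mono Ioc_subset_Icc_self).aemeasurable measurableSet_Ioc
  have : IsFiniteMeasure μ := ⟨by
    rw [← hμc, Measure.restrict_apply_univ, hμy c ⟨hc, le_rfl⟩]; exact ENNReal.ofReal_lt_top⟩
  refine Measure.ext_of_Iic _ _ fun a => ?_
  rw [Measure.map_apply₀ hy measurableSet_Iic.nullMeasurableSet, ← hμc,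
    Measure.restrict_apply' measurableSet_Ioc, Measure.restrict_apply' measurableSet_Ioc]
  have hyc0 : 0 ≤ y c := hy0 ▸ hys.monotoneOn ⟨le_rfl, hc⟩ ⟨hc, le_rfl⟩ hc
  -- `r` is where `y` reaches the level `a`, clamped to the range `[0, y c]` of `y`
  obtain ⟨r, hr, hyr⟩ : max 0 (min a (y c)) ∈ y '' Icc 0 c :=
    intermediate_value_Icc hc hyc ⟨hy0.symm ▸ le_max_left _ _, max_le hyc0 (min_le_right _ _)⟩
  have hle_iff : ∀ x ∈ Ioc 0 c, y x ≤ a ↔ x ≤ r := fun x hx => by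
    have hx' : x ∈ Icc 0 c := Ioc_subset_Icc_self hx
    have hyx : 0 < y x := hy0 ▸ hys ⟨le_rfl, hc⟩ hx' hx.1
    have hyxc : y x ≤ y c := hys.monotoneOn hx' ⟨hc, le_rfl⟩ hx.2
    rw [← hys.le_iff_le hx' hr, hyr, le_max_iff, le_min_iff]
    simp [hyx.not_ge, hyxc]
  have hpre : y ⁻¹' Iic a ∩ Ioc 0 c = Ioc 0 r := by
    ext x
    refine ⟨fun hx => ⟨hx.2.1, (hle_iff x hx.2).1 hx.1⟩, fun hx => ?_⟩
    have hxc : x ∈ Ioc 0 c := ⟨hx.1, hx.2.trans hr.2⟩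
    exact ⟨(hle_iff x hxc).2 hx.2, hxc⟩
  have hIic : Iic a ∩ Ioc 0 (y c) = Ioc 0 (y r) := by
    ext t
    simp only [mem_inter_iff, mem_Iic, mem_Ioc, hyr, le_max_iff, le_min_iff]
    grind
  rw [hpre, hIic, hμy r hr, Real.volume_Ioc, sub_zero]

theorem MeasureTheory.Measure.map_eq_of_map_eq_of_ae_leftInverse {α β : Type*}
    [MeasurableSpace α] [MeasurableSpace β] {μ : Measure α} {ν : Measure β} {f : α → β}
    {g : β → α} (hf : AEMeasurable f μ) (hg : AEMeasurable g ν) (hmap : μ.map f = ν)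
    (hgf : ∀ᵐ x ∂μ, g (f x) = x) : ν.map g = μ := by
  subst hmap
  rw [AEMeasurable.map_map_of_aemeasurable hg hf, Measure.map_congr (f := g ∘ f) (g := id) hgf,
    Measure.map_id]

theorem integral_comp_eq_integral_smul_of_map_eq_withDensity {α β E : Type*}
    [MeasurableSpace α] [MeasurableSpace β] [NormedAddCommGroup E] [NormedSpace ℝ E]
    {μ : Measure α} {ν : Measure β} {φ : β → α} {w : α → ℝ} {g : α → E} (hφ : AEMeasurable φ ν)
    (hmap : ν.map φ = μ.withDensity fun x => ENNReal.ofReal (w x)) (hw : AEMeasurable w μ)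
    (hw0 : 0 ≤ᵐ[μ] w) (hg : AEStronglyMeasurable g μ) :
    ∫ s, g (φ s) ∂ν = ∫ x, w x • g x ∂μ := by
  rw [← integral_map hφ (hmap ▸ hg.mono_ac (withDensity_absolutelyContinuous _ _)), hmap,
    integral_withDensity_eq_integral_toReal_smul₀ hw.ennreal_ofReal
      (ae_of_all _ fun _ => ENNReal.ofReal_lt_top)]
  exact integral_congr_ae (hw0.mono fun x hx => by dsimp only; rw [ENNReal.toReal_ofReal hx])

section InversePrimitive

variable {w y xinv : ℝ → ℝ} {b : ℝ}

theorem continuousOn_of_invOn_primitive (hw : IntegrableOn w (Icc 0 b))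
    (hwpos : ∀ᵐ x, x ∈ Icc 0 b → 0 < w x) (hy : ∀ x, y x = ∫ s in (0:ℝ)..x, w s)
    (hmaps : MapsTo xinv (Icc 0 (y b)) (Icc 0 b)) (hinv : InvOn xinv y (Icc 0 b) (Icc 0 (y b))) :
    ContinuousOn xinv (Icc 0 (y b)) := by
  have hys : StrictMonoOn y (Icc 0 b) :=
    (funext hy : y = _) ▸ strictMonoOn_primitive_of_ae_pos hw hwpos
  have hymaps : MapsTo y (Icc 0 b) (Icc 0 (y b)) := fun x hx =>
    ⟨by simpa [hy] using hys.monotoneOn ⟨le_rfl, hx.1.trans hx.2⟩ hx hx.1,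
      hys.monotoneOn hx ⟨hx.1.trans hx.2, le_rfl⟩ hx.2⟩
  refine MonotoneOn.continuousOn_of_surjOn_Icc (fun t₁ h₁ t₂ h₂ h => ?_) hmaps
    (hinv.1.surjOn hymaps)
  rwa [← hys.le_iff_le (hmaps h₁) (hmaps h₂), hinv.2 h₁, hinv.2 h₂]

theorem aemeasurable_restrict_Ioc_of_invOn_primitive (hw : IntegrableOn w (Icc 0 b))
    (hwpos : ∀ᵐ x, x ∈ Icc 0 b → 0 < w x) (hy : ∀ x, y x = ∫ s in (0:ℝ)..x, w s)
    (hmaps : MapsTo xinv (Icc 0 (y b)) (Icc 0 b)) (hinv : InvOn xinv y (Icc 0 b) (Icc 0 (y b)))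
    {t : ℝ} (ht : t ≤ y b) : AEMeasurable xinv (volume.restrict (Ioc 0 t)) :=
  (continuousOn_of_invOn_primitive hw hwpos hy hmaps hinv).mono
    (Ioc_subset_Icc_self.trans (Icc_subset_Icc_right ht)) |>.aemeasurable measurableSet_Ioc

theorem map_restrict_Ioc_of_invOn_primitive (hw : IntegrableOn w (Icc 0 b))
    (hwpos : ∀ᵐ x, x ∈ Icc 0 b → 0 < w x) (hy : ∀ x, y x = ∫ s in (0:ℝ)..x, w s)
    (hmaps : MapsTo xinv (Icc 0 (y b)) (Icc 0 b)) (hinv : InvOn xinv y (Icc 0 b) (Icc 0 (y b)))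
    {t : ℝ} (ht : t ∈ Icc 0 (y b)) :
    (volume.restrict (Ioc 0 t)).map xinv =
      (volume.restrict (Ioc 0 (xinv t))).withDensity fun x => ENNReal.ofReal (w x) := by
  have hc := hmaps ht
  have hsub : Icc 0 (xinv t) ⊆ Icc 0 b := Icc_subset_Icc_right hc.2
  have hyc : ContinuousOn y (Icc 0 b) :=
    (funext hy : y = _) ▸ intervalIntegral.continuousOn_primitive_of_integrableOn_Icc hw
  have hac := withDensity_absolutelyContinuous (volume.restrict (Ioc (0:ℝ) (xinv t)))
    fun x => ENNReal.ofReal (w x)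
  refine Measure.map_eq_of_map_eq_of_ae_leftInverse (f := y)
    ((hyc.mono (Ioc_subset_Icc_self.trans hsub)).aemeasurable measurableSet_Ioc |>.mono_ac hac)
    (aemeasurable_restrict_Ioc_of_invOn_primitive hw hwpos hy hmaps hinv ht.2) ?_
    (hac.ae_le ((ae_restrict_mem measurableSet_Ioc).mono fun x hx =>
      hinv.1 (hsub (Ioc_subset_Icc_self hx))))
  conv_rhs => rw [← hinv.2 ht]
  refine map_eq_volume_restrict_Ioc_of_cdf hc.1 (hac.ae_le (ae_restrict_mem measurableSet_Ioc))
    (hyc.mono hsub) (((funext hy : y = _) ▸ strictMonoOn_primitive_of_ae_pos hw hwpos).mono hsub)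
    (by simp [hy]) fun r hr => ?_
  have hrb : Ioc 0 r ⊆ Icc 0 b :=
    Ioc_subset_Icc_self.trans ((Icc_subset_Icc_right hr.2).trans hsub)
  rw [hy]
  refine withDensity_ofReal_apply_Ioc hr.1 (Ioc_subset_Ioc_right hr.2) (hw.mono_set hrb) ?_
  rw [Filter.EventuallyLE, ae_restrict_iff' measurableSet_Ioc]
  exact hwpos.mono fun s hs hs' => (hs (hrb hs')).le

theorem integral_comp_of_invOn_primitive {E : Type*} [NormedAddCommGroup E] [NormedSpace ℝ E]
    (hw : IntegrableOn w (Icc 0 b)) (hwpos : ∀ᵐ x, x ∈ Icc 0 b → 0 < w x)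
    (hy : ∀ x, y x = ∫ s in (0:ℝ)..x, w s) (hmaps : MapsTo xinv (Icc 0 (y b)) (Icc 0 b))
    (hinv : InvOn xinv y (Icc 0 b) (Icc 0 (y b))) {t : ℝ} (ht : t ∈ Icc 0 (y b)) {g : ℝ → E}
    (hg : AEStronglyMeasurable g (volume.restrict (Icc 0 b))) :
    ∫ s in (0:ℝ)..t, (w (xinv s))⁻¹ • g (xinv s) = ∫ x in (0:ℝ)..xinv t, g x := by
  have hc := hmaps ht
  have hsub : Ioc 0 (xinv t) ⊆ Icc 0 b := Ioc_subset_Icc_self.trans (Icc_subset_Icc_right hc.2)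
  have hle : volume.restrict (Ioc 0 (xinv t)) ≤ volume.restrict (Icc 0 b) :=
    Measure.restrict_mono hsub le_rfl
  have hwpos' : ∀ᵐ x ∂volume.restrict (Ioc 0 (xinv t)), 0 < w x :=
    (ae_restrict_iff' measurableSet_Ioc).2 (hwpos.mono fun x hx hx' => hx (hsub hx'))
  rw [intervalIntegral.integral_of_le ht.1, intervalIntegral.integral_of_le hc.1,
    integral_comp_eq_integral_smul_of_map_eq_withDensity
      (aemeasurable_restrict_Ioc_of_invOn_primitive hw hwpos hy hmaps hinv ht.2)
      (map_restrict_Ioc_of_invOn_primitive hw hwpos hy hmaps hinv ht)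
      (hw.aemeasurable.mono_measure hle) (hwpos'.mono fun x hx => hx.le)
      (g := fun x => (w x)⁻¹ • g x)
      ((hw.aemeasurable.inv.aestronglyMeasurable.smul hg).mono_measure hle)]
  exact integral_congr_ae (hwpos'.mono fun x hx => smul_inv_smul₀ hx.ne' (g x))

theorem ae_comp_of_invOn_primitive (hb : 0 ≤ b) (hw : IntegrableOn w (Icc 0 b))
    (hwpos : ∀ᵐ x, x ∈ Icc 0 b → 0 < w x) (hy : ∀ x, y x = ∫ s in (0:ℝ)..x, w s)
    (hmaps : MapsTo xinv (Icc 0 (y b)) (Icc 0 b)) (hinv : InvOn xinv y (Icc 0 b) (Icc 0 (y b)))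
    {p : ℝ → Prop} (hp : ∀ᵐ x, x ∈ Icc 0 b → p x) :
    ∀ᵐ t, t ∈ Icc 0 (y b) → p (xinv t) := by
  have hyb : y b ∈ Icc 0 (y b) := ⟨hy b ▸ intervalIntegral.integral_nonneg_of_ae_restrict hb
    ((ae_restrict_iff' measurableSet_Icc).2 (hwpos.mono fun x hx hx' => (hx hx').le)), le_rfl⟩
  have h : ∀ᵐ t ∂volume.restrict (Ioc 0 (y b)), p (xinv t) := by
    refine ae_of_ae_map (p := p)
      (aemeasurable_restrict_Ioc_of_invOn_primitive hw hwpos hy hmaps hinv le_rfl) ?_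
    rw [map_restrict_Ioc_of_invOn_primitive hw hwpos hy hmaps hinv hyb]
    refine (withDensity_absolutelyContinuous _ _).ae_le
      ((ae_restrict_iff' measurableSet_Ioc).2 ?_)
    exact hp.mono fun x hx hx' => hx ⟨hx'.1.le, hx'.2.trans (hmaps hyb).2⟩
  rwa [Measure.restrict_congr_set Ioc_ae_eq_Icc, ae_restrict_iff' measurableSet_Icc] at h

end InversePrimitive

theorem cmat_smul (r : ℝ) (M : Matrix (Fin 2) (Fin 2) ℝ) : cmat (r • M) = (r : ℂ) • cmat M := by
  ext i j; simp [cmat]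

theorem continuous_mul_cmat_mulVec (A : Matrix (Fin 2) (Fin 2) ℂ) :
    Continuous fun p : Matrix (Fin 2) (Fin 2) ℝ × (Fin 2 → ℂ) => (A * cmat p.1) *ᵥ p.2 := by
  unfold cmat; fun_prop

/-- trace normalization of canonical systems. With
`y(x) = ∫₀ˣ trace H`, `b₁ = y(b)`, `x(·)` the inverse of `y`, and
`H₁(t) = H(x(t))/trace H(x(t))`, the reparametrized solution `v = u ∘ x(·)` solves the
trace-normalized canonical system `𝒥 v' = -z H₁ v`, `v(0) = (1,0)ᵀ`, and
`trace H₁ = 1` a.e. -/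
theorem trace_normalization
    (b : ℝ) (hb : 0 < b)
    (H : ℝ → Matrix (Fin 2) (Fin 2) ℝ)
    (hHint : ∀ i j, IntegrableOn (fun x => H x i j) (Icc 0 b))
    (hH : ∀ᵐ x ∂volume, x ∈ Icc (0:ℝ) b → (H x).PosSemidef ∧ 0 < (H x).trace)
    (y : ℝ → ℝ) (hy : ∀ x, y x = ∫ s in (0:ℝ)..x, (H s).trace)
    (b₁ : ℝ) (hb₁ : b₁ = y b)
    (xinv : ℝ → ℝ)
    (hxinv1 : ∀ t ∈ Icc (0:ℝ) b₁, xinv t ∈ Icc (0:ℝ) b ∧ y (xinv t) = t)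
    (hxinv2 : ∀ x ∈ Icc (0:ℝ) b, xinv (y x) = x)
    (H₁ : ℝ → Matrix (Fin 2) (Fin 2) ℝ)
    (hH₁ : ∀ t, H₁ t = ((H (xinv t)).trace)⁻¹ • H (xinv t))
    (z : ℂ) (u : ℝ → Fin 2 → ℂ)
    (hucont : ContinuousOn u (Icc 0 b))
    (hueq : ∀ x ∈ Icc (0:ℝ) b,
      u x = ![1, 0] + z • ∫ s in (0:ℝ)..x, (J2C * cmat (H s)) *ᵥ u s) :
    ContinuousOn (fun t => u (xinv t)) (Icc 0 b₁) ∧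
    (∀ t ∈ Icc (0:ℝ) b₁,
      u (xinv t) = ![1, 0] + z • ∫ s in (0:ℝ)..t, (J2C * cmat (H₁ s)) *ᵥ u (xinv s)) ∧
    (∀ᵐ t ∂volume, t ∈ Icc (0:ℝ) b₁ → (H₁ t).trace = 1) := by
  subst hb₁
  have hw := integrableOn_trace hHint
  have hwpos : ∀ᵐ x, x ∈ Icc 0 b → 0 < (H x).trace := hH.mono fun x hx hxb => (hx hxb).2
  have hmaps : MapsTo xinv (Icc 0 (y b)) (Icc 0 b) := fun t ht => (hxinv1 t ht).1
  have hinv : InvOn xinv y (Icc 0 b) (Icc 0 (y b)) := ⟨hxinv2, fun t ht => (hxinv1 t ht).2⟩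
  refine ⟨hucont.comp (continuousOn_of_invOn_primitive hw hwpos hy hmaps hinv) hmaps,
    fun t ht => ?_, ?_⟩
  · have hHm : AEStronglyMeasurable H (volume.restrict (Icc 0 b)) :=
      aestronglyMeasurable_matrix_of_entries fun i j => (hHint i j).aemeasurable
    have hg : AEStronglyMeasurable (fun x => (J2C * cmat (H x)) *ᵥ u x)
        (volume.restrict (Icc 0 b)) :=
      (continuous_mul_cmat_mulVec J2C).comp_aestronglyMeasurable (f := fun x => (H x, u x))
        (hHm.prodMk (hucont.aestronglyMeasurable measurableSet_Icc))
    simp only [hH₁, cmat_smul, Matrix.mul_smul, Matrix.smul_mulVec, Complex.coe_smul]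
    rw [integral_comp_of_invOn_primitive hw hwpos hy hmaps hinv ht hg, hueq _ (hmaps ht)]
  · filter_upwards [ae_comp_of_invOn_primitive hb.le hw hwpos hy hmaps hinv hwpos] with t ht ht'
    rw [hH₁, trace_smul, smul_eq_mul, inv_mul_cancel₀ (ht ht').ne']
end
end

section
/- (The trace reparametrization is an isometry of the weighted L² spaces.) Let b > 0 and let H : [0,b] → Matrix (Fin 2) (Fin 2) ℝ be integrable, a.e. symmetric positive semidefinite, with trace H(x) > 0 a.e. Let y(x) = ∫₀ˣ trace H(s) ds, b₁ = y(b), x(·) : [0,b₁] → [0,b] the inverse of y, and H₁(t) = H(x(t)) / trace H(x(t)). Then for every measurable f : [0,b] → ℂ², ∫₀^{b₁} f(x(t))* H₁(t) f(x(t)) dt = ∫₀^b f(x)* H(x) f(x) dx (both sides possibly +∞), where * denotes conjugate transpose. -/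
/-! The primitive `y` of `trace H` is strictly increasing, and its inverse `x(·)` pushes Lebesgue
measure on `(0, b₁]` forward to the measure `trace H(x) dx` on `(0, b]`: both measures give
`(-∞, x]` the mass `y x`. Integrating `f* H₁ f ∘ x(·)` against Lebesgue measure is therefore
integrating `f* H f / trace H` against `trace H(x) dx`, and the two factors of `trace H` cancel. -/

open MeasureTheory Matrix Set

noncomputable section

theorem StrictMonoOn.monotoneOn_of_rightInvOn {α β : Type*} [LinearOrder α] [Preorder β]
    {F : α → β} {φ : β → α} {s : Set α} {t : Set β} (hF : StrictMonoOn F s)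
    (hφ : MapsTo φ t s) (hinv : RightInvOn φ F t) : MonotoneOn φ t := fun _ ht₁ _ ht₂ h =>
  (hF.le_iff_le (hφ ht₁) (hφ ht₂)).1 (by rwa [hinv ht₁, hinv ht₂])

theorem StrictMonoOn.aemeasurable_of_rightInvOn {F φ : ℝ → ℝ} {s : Set ℝ} {c d : ℝ}
    (hF : StrictMonoOn F s) (hφ : MapsTo φ (Icc c d) s) (hinv : RightInvOn φ F (Icc c d)) :
    AEMeasurable φ (volume.restrict (Ioc c d)) :=
  (aemeasurable_restrict_of_monotoneOn measurableSet_Icc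
    (hF.monotoneOn_of_rightInvOn hφ hinv)).mono_measure
    (Measure.restrict_mono Ioc_subset_Icc_self le_rfl)

theorem setIntegral_pos_of_ae_pos {α : Type*} [MeasurableSpace α] {μ : Measure α} {w : α → ℝ}
    {s : Set α} (hs : μ s ≠ 0) (hw : IntegrableOn w s μ) (hpos : ∀ᵐ x ∂μ.restrict s, 0 < w x) :
    0 < ∫ x in s, w x ∂μ := by
  rw [integral_pos_iff_support_of_nonneg_ae (hpos.mono fun _ hx => hx.le) hw]
  have : Function.support w =ᵐ[μ.restrict s] (univ : Set α) :=
    ae_eq_univ.2 <| measure_mono_null (fun x hx => by simp_all) (ae_iff.1 hpos)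
  rwa [measure_congr this, Measure.restrict_apply_univ, pos_iff_ne_zero]

theorem Measure.ext_of_Iic_of_restrict_Ioc {μ ν : Measure ℝ} [IsFiniteMeasure μ] {a b : ℝ}
    (hab : a ≤ b) (hμ : μ.restrict (Ioc a b) = μ) (hν : ν.restrict (Ioc a b) = ν)
    (h : ∀ x ∈ Icc a b, μ (Iic x) = ν (Iic x)) : μ = ν := by
  refine Measure.ext_of_Iic μ ν fun x => ?_
  have hx : Iic x ∩ Ioc a b = Iic (max a (min x b)) ∩ Ioc a b := by
    ext y
    simp only [mem_inter_iff, mem_Iic, mem_Ioc, le_max_iff, le_min_iff]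
    constructor
    · rintro ⟨h1, h2, h3⟩
      exact ⟨Or.inr ⟨h1, h3⟩, h2, h3⟩
    · rintro ⟨h1 | ⟨h1, -⟩, h2, h3⟩
      · exact absurd h2 h1.not_gt
      · exact ⟨h1, h2, h3⟩
  rw [← hμ, ← hν, Measure.restrict_apply measurableSet_Iic,
    Measure.restrict_apply measurableSet_Iic, hx, ← Measure.restrict_apply measurableSet_Iic,
    ← Measure.restrict_apply measurableSet_Iic, hμ, hν]
  exact h _ ⟨le_max_left _ _, max_le hab (min_le_right _ _)⟩

section Primitive

variable {w F φ : ℝ → ℝ} {a b : ℝ}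

theorem integral_Ioc_eq_sub_of_primitive (hF : ∀ x, F x = ∫ s in a..x, w s)
    (hw : IntegrableOn w (Icc a b)) {u v : ℝ} (hu : u ∈ Icc a b) (hv : v ∈ Icc a b)
    (huv : u ≤ v) : ∫ x in Ioc u v, w x = F v - F u := by
  have hint : ∀ x ∈ Icc a b, IntervalIntegrable w volume a x := fun x hx =>
    (hw.mono_set (by rw [uIcc_of_le hx.1]; exact Icc_subset_Icc le_rfl hx.2)).intervalIntegrable
  rw [hF, hF, intervalIntegral.integral_interval_sub_left (hint v hv) (hint u hu),
    intervalIntegral.integral_of_le huv]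

theorem strictMonoOn_of_primitive (hF : ∀ x, F x = ∫ s in a..x, w s)
    (hw : IntegrableOn w (Icc a b)) (hpos : ∀ᵐ x ∂volume.restrict (Icc a b), 0 < w x) :
    StrictMonoOn F (Icc a b) := by
  intro u hu v hv huv
  have hsub : Ioc u v ⊆ Icc a b := fun x hx => ⟨hu.1.trans hx.1.le, hx.2.trans hv.2⟩
  have := setIntegral_pos_of_ae_pos (by simpa using huv) (hw.mono_set hsub)
    (ae_restrict_of_ae_restrict_of_subset hsub hpos)
  linarith [integral_Ioc_eq_sub_of_primitive hF hw hu hv huv.le]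

variable (hF : ∀ x, F x = ∫ s in a..x, w s) (hab : a ≤ b) (hw : IntegrableOn w (Icc a b))
  (hpos : ∀ᵐ x ∂volume.restrict (Icc a b), 0 < w x)
  (hφ : MapsTo φ (Icc 0 (F b)) (Icc a b)) (hinv : RightInvOn φ F (Icc 0 (F b)))
include hF hab hw hpos hφ hinv

theorem map_restrict_Ioc_eq_withDensity_of_rightInvOn :
    (volume.restrict (Ioc 0 (F b))).map φ
      = (volume.restrict (Ioc a b)).withDensity fun x => ENNReal.ofReal (w x) := by
  have hF_mono := strictMonoOn_of_primitive hF hw hpos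
  have hFa : F a = 0 := by simp [hF]
  have hφ_meas := hF_mono.aemeasurable_of_rightInvOn hφ hinv
  have hφ_Ioc : MapsTo φ (Ioc 0 (F b)) (Ioc a b) := fun t ht => by
    have ht' : t ∈ Icc 0 (F b) := Ioc_subset_Icc_self ht
    refine ⟨(hF_mono.lt_iff_lt (left_mem_Icc.2 hab) (hφ ht')).1 ?_, (hφ ht').2⟩
    rw [hFa, hinv ht']
    exact ht.1
  have hpreimage : ∀ x ∈ Icc a b, φ ⁻¹' Iic x ∩ Ioc 0 (F b) = Ioc 0 (F x) := by
    intro x hx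
    ext t
    constructor
    · rintro ⟨htx, ht⟩
      refine ⟨ht.1, ?_⟩
      rw [← hinv (Ioc_subset_Icc_self ht)]
      exact hF_mono.monotoneOn (hφ (Ioc_subset_Icc_self ht)) hx htx
    · rintro ⟨ht0, htx⟩
      have ht : t ∈ Icc 0 (F b) :=
        ⟨ht0.le, htx.trans (hF_mono.monotoneOn hx (right_mem_Icc.2 hab) hx.2)⟩
      exact ⟨(hF_mono.le_iff_le (hφ ht) hx).1 (by rwa [hinv ht]), ht0, ht.2⟩
  have := isFiniteMeasure_withDensity_ofReal (hw.mono_set Ioc_subset_Icc_self).2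
  refine (Measure.ext_of_Iic_of_restrict_Ioc hab ?_ ?_ fun x hx => ?_).symm
  · exact Measure.restrict_eq_self_of_ae_mem
      ((withDensity_absolutelyContinuous _ _).ae_le (ae_restrict_mem measurableSet_Ioc))
  · exact Measure.restrict_eq_self_of_ae_mem ((ae_map_iff hφ_meas measurableSet_Ioc).2
      (ae_restrict_of_forall_mem measurableSet_Ioc hφ_Ioc))
  have hax : Ioc a x ⊆ Icc a b := Ioc_subset_Icc_self.trans (Icc_subset_Icc le_rfl hx.2)
  rw [Measure.map_apply_of_aemeasurable hφ_meas measurableSet_Iic,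
    Measure.restrict_apply' measurableSet_Ioc, hpreimage x hx, Real.volume_Ioc, sub_zero,
    withDensity_apply _ measurableSet_Iic, Measure.restrict_restrict measurableSet_Iic,
    Iic_inter_Ioc_of_le hx.2, ← ofReal_integral_eq_lintegral_ofReal (hw.mono_set hax)
      ((ae_restrict_of_ae_restrict_of_subset hax hpos).mono fun _ h => h.le),
    integral_Ioc_eq_sub_of_primitive hF hw (left_mem_Icc.2 hab) hx hx.1, hFa, sub_zero]

theorem lintegral_comp_rightInvOn_eq_lintegral_mul {g : ℝ → ENNReal}
    (hg : AEMeasurable g (volume.restrict (Ioc a b))) :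
    ∫⁻ t in Ioc 0 (F b), g (φ t) = ∫⁻ x in Ioc a b, ENNReal.ofReal (w x) * g x := by
  have hmap := map_restrict_Ioc_eq_withDensity_of_rightInvOn hF hab hw hpos hφ hinv
  have hφ_meas := (strictMonoOn_of_primitive hF hw hpos).aemeasurable_of_rightInvOn hφ hinv
  rw [← lintegral_map' (hmap ▸ hg.mono_ac (withDensity_absolutelyContinuous _ _)) hφ_meas, hmap,
    lintegral_withDensity_eq_lintegral_mul₀
      (hw.mono_set Ioc_subset_Icc_self).aemeasurable.ennreal_ofReal hg]
  rfl

end Primitive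

theorem re_star_dotProduct_cmat_smul_mulVec (r : ℝ) (M : Matrix (Fin 2) (Fin 2) ℝ)
    (v : Fin 2 → ℂ) :
    (star v ⬝ᵥ (cmat (r • M) *ᵥ v)).re = r * (star v ⬝ᵥ (cmat M *ᵥ v)).re := by
  rw [cmat_smul, smul_mulVec, dotProduct_smul, smul_eq_mul, Complex.re_ofReal_mul]

theorem aemeasurable_re_star_dotProduct_cmat_mulVec {α : Type*} [MeasurableSpace α]
    {μ : Measure α} {M : α → Matrix (Fin 2) (Fin 2) ℝ} {f : α → Fin 2 → ℂ}
    (hM : ∀ i j, AEMeasurable (fun x => M x i j) μ) (hf : AEMeasurable f μ) :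
    AEMeasurable (fun x => (star (f x) ⬝ᵥ (cmat (M x) *ᵥ f x)).re) μ := by
  have hfi : ∀ i, AEMeasurable (fun x => f x i) μ := fun i =>
    (measurable_pi_apply i).comp_aemeasurable hf
  simp only [cmat, dotProduct, mulVec, Fin.sum_univ_two, Matrix.map_apply, Pi.star_apply]
  fun_prop

theorem trace_reparametrization_isometry_general
    (b : ℝ) (hb : 0 < b)
    (H : ℝ → Matrix (Fin 2) (Fin 2) ℝ)
    (hHint : ∀ i j, IntegrableOn (fun x => H x i j) (Icc 0 b))
    (hH : ∀ᵐ x ∂volume, x ∈ Icc (0:ℝ) b → (H x).PosSemidef ∧ 0 < (H x).trace)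
    (y : ℝ → ℝ) (hy : ∀ x, y x = ∫ s in (0:ℝ)..x, (H s).trace)
    (b₁ : ℝ) (hb₁ : b₁ = y b)
    (xinv : ℝ → ℝ)
    (hxinv1 : ∀ t ∈ Icc (0:ℝ) b₁, xinv t ∈ Icc (0:ℝ) b ∧ y (xinv t) = t)
    (H₁ : ℝ → Matrix (Fin 2) (Fin 2) ℝ)
    (hH₁ : ∀ t, H₁ t = ((H (xinv t)).trace)⁻¹ • H (xinv t))
    (f : ℝ → Fin 2 → ℂ) (hf : Measurable f) :
    ∫⁻ t in Ioc (0:ℝ) b₁,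
        ENNReal.ofReal ((star (f (xinv t)) ⬝ᵥ (cmat (H₁ t) *ᵥ f (xinv t))).re)
      = ∫⁻ x in Ioc (0:ℝ) b,
          ENNReal.ofReal ((star (f x) ⬝ᵥ (cmat (H x) *ᵥ f x)).re) := by
  subst hb₁
  set q : ℝ → ℝ := fun x => (star (f x) ⬝ᵥ (cmat (H x) *ᵥ f x)).re
  have htr : IntegrableOn (fun x => (H x).trace) (Icc 0 b) := by
    simpa only [Matrix.trace_fin_two, Pi.add_def] using (hHint 0 0).add (hHint 1 1)
  have hpos : ∀ᵐ x ∂volume.restrict (Icc 0 b), 0 < (H x).trace :=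
    (ae_restrict_iff' measurableSet_Icc).2 (hH.mono fun _ hx hmem => (hx hmem).2)
  have hq : AEMeasurable q (volume.restrict (Ioc 0 b)) :=
    aemeasurable_re_star_dotProduct_cmat_mulVec
      (fun i j => ((hHint i j).mono_set Ioc_subset_Icc_self).aemeasurable) hf.aemeasurable
  have htr_meas : AEMeasurable (fun x => (H x).trace) (volume.restrict (Ioc 0 b)) :=
    (htr.mono_set Ioc_subset_Icc_self).aemeasurable
  calc _ = ∫⁻ t in Ioc 0 (y b), ENNReal.ofReal ((H (xinv t)).trace⁻¹ * q (xinv t)) := by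
        simp only [q, hH₁, re_star_dotProduct_cmat_smul_mulVec]
    _ = ∫⁻ x in Ioc 0 b, ENNReal.ofReal (H x).trace * ENNReal.ofReal ((H x).trace⁻¹ * q x) :=
        lintegral_comp_rightInvOn_eq_lintegral_mul hy hb.le htr hpos
          (fun t ht => (hxinv1 t ht).1) (fun t ht => (hxinv1 t ht).2)
          (htr_meas.inv.mul hq).ennreal_ofReal
    _ = _ := by
        refine lintegral_congr_ae ?_
        filter_upwards [ae_restrict_of_ae_restrict_of_subset Ioc_subset_Icc_self hpos] with x hx
        rw [← ENNReal.ofReal_mul hx.le, mul_inv_cancel_left₀ hx.ne']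

/-- the trace reparametrization is an isometry of the weighted L²
spaces. With `y(x) = ∫₀ˣ trace H`, `b₁ = y(b)`, `x(·)` the inverse of `y`, and
`H₁(t) = H(x(t))/trace H(x(t))`, for every measurable `f : [0,b] → ℂ²` one has
`∫₀^{b₁} f(x(t))* H₁(t) f(x(t)) dt = ∫₀ᵇ f(x)* H(x) f(x) dx` (possibly `+∞`). -/
theorem trace_reparametrization_isometry
    (b : ℝ) (hb : 0 < b)
    (H : ℝ → Matrix (Fin 2) (Fin 2) ℝ)
    (hHint : ∀ i j, IntegrableOn (fun x => H x i j) (Icc 0 b))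
    (hH : ∀ᵐ x ∂volume, x ∈ Icc (0:ℝ) b → (H x).PosSemidef ∧ 0 < (H x).trace)
    (y : ℝ → ℝ) (hy : ∀ x, y x = ∫ s in (0:ℝ)..x, (H s).trace)
    (b₁ : ℝ) (hb₁ : b₁ = y b)
    (xinv : ℝ → ℝ)
    (hxinv1 : ∀ t ∈ Icc (0:ℝ) b₁, xinv t ∈ Icc (0:ℝ) b ∧ y (xinv t) = t)
    (hxinv2 : ∀ x ∈ Icc (0:ℝ) b, xinv (y x) = x)
    (H₁ : ℝ → Matrix (Fin 2) (Fin 2) ℝ)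
    (hH₁ : ∀ t, H₁ t = ((H (xinv t)).trace)⁻¹ • H (xinv t))
    (f : ℝ → Fin 2 → ℂ) (hf : Measurable f) :
    ∫⁻ t in Ioc (0:ℝ) b₁,
        ENNReal.ofReal ((star (f (xinv t)) ⬝ᵥ (cmat (H₁ t) *ᵥ f (xinv t))).re)
      = ∫⁻ x in Ioc (0:ℝ) b,
          ENNReal.ofReal ((star (f x) ⬝ᵥ (cmat (H x) *ᵥ f x)).re) :=
  trace_reparametrization_isometry_general b hb H hHint hH y hy b₁ hb₁ xinv hxinv1 H₁ hH₁ f hf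
end
end
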